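/- arXiv:1202.5346 — 7 statements merged into one kernel-verified Lean document; each statement's English description precedes it below -/
import Mathlib

section
/- Let 𝕋 = {z ∈ ℂ : |z| = 1} be the unit circle, D = {z ∈ ℂ : |z| < 1} the open unit disc, I = [0,1], and let T₀, T_I, T₁ be pairwise disjoint dense subsets of 𝕋. Then the set X = (D × I) ∪ (T_I × I) ∪ (T₀ × {0}) ∪ (T₁ × {1}) is a convex subset of ℂ × ℝ that is not upper compactly convex; in particular, X is not compactly convex. -/
open TopologicalSpace Set

/-- The Vietoris topology on the hyperspace `exp C` of nonempty compact subsets of `C`,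
generated by the subbasic sets `⟨U⟩ = {K : K ⊆ U}` and `⟩U⟨ = {K : K ∩ U ≠ ∅}`
for `U` open in `C`. -/
def vietorisTopology (C : Type*) [TopologicalSpace C] :
    TopologicalSpace (NonemptyCompacts C) :=
  generateFrom
    ({S | ∃ U : Set C, IsOpen U ∧ S = {K : NonemptyCompacts C | (K : Set C) ⊆ U}} ∪
     {S | ∃ U : Set C, IsOpen U ∧ S = {K : NonemptyCompacts C | ((K : Set C) ∩ U).Nonempty}})

/-- A convex set `X` in a real topological vector space is compactly convex if there is a
map `Φ` assigning to each `x ∈ X` a nonempty compact subset `Φ(x) ⊆ X`, continuous with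
respect to the Vietoris topology, such that `[x,y] ⊆ Φ(x) ∪ Φ(y)` for all `x, y ∈ X`. -/
def IsCompactlyConvex {L : Type*} [TopologicalSpace L] [AddCommGroup L] [Module ℝ L]
    (X : Set L) : Prop :=
  ∃ Φ : X → NonemptyCompacts X,
    @Continuous _ _ _ (vietorisTopology X) Φ ∧
    ∀ x y : X, segment ℝ (x : L) (y : L) ⊆ Subtype.val '' ((Φ x : Set X) ∪ (Φ y : Set X))

/-- A convex set `X` is upper compactly convex if there is an upper semicontinuous
map `Φ` assigning to each `x ∈ X` a nonempty compact subset `Φ(x) ⊆ X` such that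
`[x,y] ⊆ Φ(x) ∪ Φ(y)` for all `x, y ∈ X`. -/
def IsUpperCompactlyConvex {L : Type*} [TopologicalSpace L] [AddCommGroup L] [Module ℝ L]
    (X : Set L) : Prop :=
  ∃ Φ : X → NonemptyCompacts X,
    (∀ U : Set X, IsOpen U → IsOpen {x : X | (Φ x : Set X) ⊆ U}) ∧
    ∀ x y : X, segment ℝ (x : L) (y : L) ⊆ Subtype.val '' ((Φ x : Set X) ∪ (Φ y : Set X))

/-- The convex set `X = (D × I) ∪ (T_I × I) ∪ (T₀ × {0}) ∪ (T₁ × {1}) ⊆ ℂ × ℝ`,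
where `T₀, T_I, T₁` are pairwise disjoint dense subsets of the unit circle `𝕋` and
`D` is the open unit disc, is convex but not (upper) compactly convex. -/
theorem counterexample_in_R3
    (T0 TI T1 : Set ℂ)
    (hT0sub : T0 ⊆ {z : ℂ | ‖z‖ = 1})
    (hTIsub : TI ⊆ {z : ℂ | ‖z‖ = 1})
    (hT1sub : T1 ⊆ {z : ℂ | ‖z‖ = 1})
    (hd0I : Disjoint T0 TI) (hd01 : Disjoint T0 T1) (hdI1 : Disjoint TI T1)
    (hdense0 : {z : ℂ | ‖z‖ = 1} ⊆ closure T0)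
    (hdenseI : {z : ℂ | ‖z‖ = 1} ⊆ closure TI)
    (hdense1 : {z : ℂ | ‖z‖ = 1} ⊆ closure T1)
    (X : Set (ℂ × ℝ))
    (hXdef : X = ({z : ℂ | ‖z‖ < 1} ×ˢ Icc (0 : ℝ) 1) ∪ (TI ×ˢ Icc (0 : ℝ) 1) ∪
      (T0 ×ˢ {(0 : ℝ)}) ∪ (T1 ×ˢ {(1 : ℝ)})) :
    Convex ℝ X ∧ ¬ IsUpperCompactlyConvex X ∧ ¬ IsCompactlyConvex X := by
  -- membership characterization
  have hX : ∀ p : ℂ × ℝ, p ∈ X ↔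
      (‖p.1‖ < 1 ∧ p.2 ∈ Icc (0 : ℝ) 1) ∨ (p.1 ∈ TI ∧ p.2 ∈ Icc (0 : ℝ) 1) ∨
      (p.1 ∈ T0 ∧ p.2 = 0) ∨ (p.1 ∈ T1 ∧ p.2 = 1) := by
    intro p
    rw [hXdef]
    simp only [Set.mem_union, Set.mem_prod, Set.mem_setOf_eq, Set.mem_singleton_iff]
    tauto
  have hmemI : ∀ z ∈ TI, ∀ t ∈ Icc (0 : ℝ) 1, ((z, t) : ℂ × ℝ) ∈ X := by
    intro z hz t ht
    exact (hX (z, t)).mpr (Or.inr (Or.inl ⟨hz, ht⟩))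
  have hmem0 : ∀ z ∈ T0, ((z, (0 : ℝ)) : ℂ × ℝ) ∈ X := by
    intro z hz
    exact (hX (z, 0)).mpr (Or.inr (Or.inr (Or.inl ⟨hz, rfl⟩)))
  have hmem1 : ∀ z ∈ T1, ((z, (1 : ℝ)) : ℂ × ℝ) ∈ X := by
    intro z hz
    exact (hX (z, 1)).mpr (Or.inr (Or.inr (Or.inr ⟨hz, rfl⟩)))
  have hmid0 : ∀ z ∈ T0, ((z, (1 : ℝ) / 2) : ℂ × ℝ) ∉ X := by
    intro z hz h
    rcases (hX _).mp h with ⟨h1, _⟩ | ⟨h1, _⟩ | ⟨_, h2⟩ | ⟨_, h2⟩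
    · rw [hT0sub hz] at h1; exact lt_irrefl 1 h1
    · exact (Set.disjoint_left.mp hd0I hz) h1
    · norm_num at h2
    · norm_num at h2
  have hmid1 : ∀ z ∈ T1, ((z, (1 : ℝ) / 2) : ℂ × ℝ) ∉ X := by
    intro z hz h
    rcases (hX _).mp h with ⟨h1, _⟩ | ⟨h1, _⟩ | ⟨h1, _⟩ | ⟨_, h2⟩
    · rw [hT1sub hz] at h1; exact lt_irrefl 1 h1
    · exact (Set.disjoint_right.mp hdI1 hz) h1
    · exact (Set.disjoint_left.mp hd01 h1) hz
    · norm_num at h2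
  -- Convexity
  have hconv : Convex ℝ X := by
    intro p hp q hq a b ha hb hab
    obtain rfl | ha' := ha.eq_or_lt
    · have hb1 : b = 1 := by linarith
      subst hb1; simpa using hq
    obtain rfl | hb' := hb.eq_or_lt
    · have ha1 : a = 1 := by linarith
      subst ha1; simpa using hp
    have hpn : ‖p.1‖ ≤ 1 ∧ p.2 ∈ Icc (0 : ℝ) 1 := by
      rcases (hX p).mp hp with ⟨h1, h2⟩ | ⟨h1, h2⟩ | ⟨h1, h2⟩ | ⟨h1, h2⟩
      · exact ⟨by exact h1.le, h2⟩
      · exact ⟨by rw [hTIsub h1], h2⟩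
      · exact ⟨by rw [hT0sub h1], by rw [h2]; exact ⟨le_refl 0, zero_le_one⟩⟩
      · exact ⟨by rw [hT1sub h1], by rw [h2]; exact ⟨zero_le_one, le_refl 1⟩⟩
    have hqn : ‖q.1‖ ≤ 1 ∧ q.2 ∈ Icc (0 : ℝ) 1 := by
      rcases (hX q).mp hq with ⟨h1, h2⟩ | ⟨h1, h2⟩ | ⟨h1, h2⟩ | ⟨h1, h2⟩
      · exact ⟨by exact h1.le, h2⟩
      · exact ⟨by rw [hTIsub h1], h2⟩
      · exact ⟨by rw [hT0sub h1], by rw [h2]; exact ⟨le_refl 0, zero_le_one⟩⟩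
      · exact ⟨by rw [hT1sub h1], by rw [h2]; exact ⟨zero_le_one, le_refl 1⟩⟩
    have hfst : (a • p + b • q).1 = a • p.1 + b • q.1 := rfl
    have hsnd : (a • p + b • q).2 = a * p.2 + b * q.2 := rfl
    have hIcc : a * p.2 + b * q.2 ∈ Icc (0 : ℝ) 1 :=
      (convex_Icc (0 : ℝ) 1) hpn.2 hqn.2 ha hb hab
    by_cases hne : p.1 = q.1
    · -- same first coordinate
      have hu : a • p.1 + b • q.1 = p.1 := by
        rw [← hne, ← add_smul, hab, one_smul]
      rcases lt_or_ge (‖p.1‖) 1 with hlt | hge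
      · refine (hX _).mpr (Or.inl ⟨?_, ?_⟩)
        · rw [hfst, hu]; exact hlt
        · rw [hsnd]; exact hIcc
      · -- |p.1| = 1, so p.1 lies in exactly one of T0, TI, T1
        rcases (hX p).mp hp with ⟨h1, _⟩ | ⟨h1, h2⟩ | ⟨h1, h2⟩ | ⟨h1, h2⟩
        · exact absurd h1 (not_lt.mpr hge)
        · -- p.1 ∈ TI
          rcases (hX q).mp hq with ⟨hq1, _⟩ | ⟨hq1, hq2⟩ | ⟨hq1, hq2⟩ | ⟨hq1, hq2⟩
          · rw [← hne] at hq1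
            exact absurd hq1 (not_lt.mpr hge)
          · refine (hX _).mpr (Or.inr (Or.inl ⟨?_, ?_⟩))
            · rw [hfst, hu]; exact h1
            · rw [hsnd]; exact hIcc
          · rw [← hne] at hq1
            exact absurd h1 (Set.disjoint_left.mp hd0I hq1)
          · rw [← hne] at hq1
            exact absurd hq1 (Set.disjoint_left.mp hdI1 h1)
        · -- p.1 ∈ T0, p.2 = 0
          rcases (hX q).mp hq with ⟨hq1, _⟩ | ⟨hq1, hq2⟩ | ⟨hq1, hq2⟩ | ⟨hq1, hq2⟩
          · rw [← hne] at hq1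
            exact absurd hq1 (not_lt.mpr hge)
          · rw [← hne] at hq1
            exact absurd hq1 (Set.disjoint_left.mp hd0I h1)
          · refine (hX _).mpr (Or.inr (Or.inr (Or.inl ⟨?_, ?_⟩)))
            · rw [hfst, hu]; exact h1
            · rw [hsnd, h2, hq2]; ring
          · rw [← hne] at hq1
            exact absurd hq1 (Set.disjoint_left.mp hd01 h1)
        · -- p.1 ∈ T1, p.2 = 1
          rcases (hX q).mp hq with ⟨hq1, _⟩ | ⟨hq1, hq2⟩ | ⟨hq1, hq2⟩ | ⟨hq1, hq2⟩
          · rw [← hne] at hq1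
            exact absurd hq1 (not_lt.mpr hge)
          · rw [← hne] at hq1
            exact absurd hq1 (Set.disjoint_right.mp hdI1 h1)
          · rw [← hne] at hq1
            exact absurd h1 (Set.disjoint_left.mp hd01 hq1)
          · refine (hX _).mpr (Or.inr (Or.inr (Or.inr ⟨?_, ?_⟩)))
            · rw [hfst, hu]; exact h1
            · rw [hsnd, h2, hq2]; linarith
    · -- distinct first coordinates: strict convexity of the disc
      have hlt : ‖a • p.1 + b • q.1‖ < 1 :=
        norm_combo_lt_of_ne hpn.1 hqn.1 hne ha' hb' hab
      refine (hX _).mpr (Or.inl ⟨?_, ?_⟩)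
      · rw [hfst]; exact hlt
      · rw [hsnd]; exact hIcc
  -- Not upper compactly convex
  have hNU : ¬ IsUpperCompactlyConvex X := by
    rintro ⟨Φ, husc, hseg⟩
    -- the key local lemma
    have key : ∀ (c : ℝ) (z₀ : ℂ) (h1 : ((z₀, c) : ℂ × ℝ) ∈ X),
        ((z₀, (1 : ℝ) / 2) : ℂ × ℝ) ∉ X →
        ∃ ε > 0, ∀ z, dist z z₀ < ε →
          ∀ (hzc : ((z, c) : ℂ × ℝ) ∈ X) (hm : ((z, (1 : ℝ) / 2) : ℂ × ℝ) ∈ X),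
            (⟨(z, 1 / 2), hm⟩ : X) ∉ (Φ ⟨(z, c), hzc⟩ : Set X) := by
      intro c z₀ h1 h2
      set x₀ : X := ⟨(z₀, c), h1⟩ with hx₀
      set p : ℂ × ℝ := (z₀, (1 : ℝ) / 2) with hp
      have hKcl : IsClosed (Subtype.val '' ((Φ x₀ : Set X))) :=
        ((Φ x₀).isCompact.image continuous_subtype_val).isClosed
      have hpK : p ∉ Subtype.val '' (Φ x₀ : Set X) := by
        rintro ⟨y, _, hyx⟩
        exact h2 (hyx ▸ y.2)
      obtain ⟨r, hr, hball⟩ := Metric.isOpen_iff.mp hKcl.isOpen_compl p hpK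
      set U : Set X := Subtype.val ⁻¹' (Metric.closedBall p (r / 2))ᶜ with hU
      have hUopen : IsOpen U :=
        (Metric.isClosed_closedBall.isOpen_compl).preimage continuous_subtype_val
      have hKU : (Φ x₀ : Set X) ⊆ U := by
        intro k hk hmem
        have hk' : (k : ℂ × ℝ) ∈ Metric.ball p r :=
          Metric.closedBall_subset_ball (by linarith) hmem
        exact (hball hk') ⟨k, hk, rfl⟩
      obtain ⟨ε', hε', hε'ball⟩ := Metric.isOpen_iff.mp (husc U hUopen) x₀ hKU
      refine ⟨min ε' (r / 2), lt_min hε' (by linarith), ?_⟩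
      intro z hdz hzc hm hmemΦ
      have hdz' : dist z z₀ < ε' := lt_of_lt_of_le hdz (min_le_left _ _)
      have hdzr : dist z z₀ < r / 2 := lt_of_lt_of_le hdz (min_le_right _ _)
      have hxx : dist (⟨(z, c), hzc⟩ : X) x₀ < ε' := by
        rw [Subtype.dist_eq, hx₀]
        show dist ((z, c) : ℂ × ℝ) ((z₀, c) : ℂ × ℝ) < ε'
        rw [Prod.dist_eq]
        simp only [dist_self]
        rw [max_eq_left dist_nonneg]
        exact hdz'
      have hsub : (Φ ⟨(z, c), hzc⟩ : Set X) ⊆ U := hε'ball hxx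
      have hmem' := hsub hmemΦ
      apply hmem'
      show ((z, (1 : ℝ) / 2) : ℂ × ℝ) ∈ Metric.closedBall p (r / 2)
      rw [Metric.mem_closedBall, hp, Prod.dist_eq]
      simp only [dist_self]
      rw [max_eq_left dist_nonneg]
      exact hdzr.le
    -- pick a point of T0
    have hone : (1 : ℂ) ∈ {z : ℂ | ‖z‖ = 1} := by simp
    have hT0ne : T0.Nonempty := by
      by_contra h
      rw [Set.not_nonempty_iff_eq_empty] at h
      have := hdense0 hone
      rw [h, closure_empty] at this
      exact this
    obtain ⟨z₀, hz₀⟩ := hT0ne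
    obtain ⟨ε₀, hε₀, H₀⟩ := key 0 z₀ (hmem0 z₀ hz₀) (hmid0 z₀ hz₀)
    -- a T1 point near z₀
    have hz₀c : z₀ ∈ closure T1 := hdense1 (hT0sub hz₀)
    obtain ⟨z₁, hz₁, hd₁⟩ := Metric.mem_closure_iff.mp hz₀c (ε₀ / 2) (by linarith)
    obtain ⟨ε₁, hε₁, H₁⟩ := key 1 z₁ (hmem1 z₁ hz₁) (hmid1 z₁ hz₁)
    -- a TI point near z₁
    have hz₁c : z₁ ∈ closure TI := hdenseI (hT1sub hz₁)
    obtain ⟨z, hz, hd⟩ := Metric.mem_closure_iff.mp hz₁c (min ε₁ (ε₀ / 2))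
      (lt_min hε₁ (by linarith))
    have hdz1 : dist z z₁ < ε₁ := by
      rw [dist_comm]; exact lt_of_lt_of_le hd (min_le_left _ _)
    have hdz0 : dist z z₀ < ε₀ := by
      calc dist z z₀ ≤ dist z z₁ + dist z₁ z₀ := dist_triangle _ _ _
        _ < ε₀ / 2 + ε₀ / 2 := by
            refine add_lt_add ?_ ?_
            · rw [dist_comm]; exact lt_of_lt_of_le hd (min_le_right _ _)
            · rw [dist_comm]; exact hd₁
        _ = ε₀ := by ring
    have hz0X : ((z, (0 : ℝ)) : ℂ × ℝ) ∈ X := hmemI z hz 0 ⟨le_refl 0, zero_le_one⟩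
    have hz1X : ((z, (1 : ℝ)) : ℂ × ℝ) ∈ X := hmemI z hz 1 ⟨zero_le_one, le_refl 1⟩
    have hmX : ((z, (1 : ℝ) / 2) : ℂ × ℝ) ∈ X := hmemI z hz (1 / 2) ⟨by norm_num, by norm_num⟩
    have hsegmem : ((z, (1 : ℝ) / 2) : ℂ × ℝ) ∈
        segment ℝ (((z, (0 : ℝ)) : ℂ × ℝ)) (((z, (1 : ℝ)) : ℂ × ℝ)) := by
      refine ⟨1 / 2, 1 / 2, by norm_num, by norm_num, by norm_num, ?_⟩
      refine Prod.ext ?_ ?_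
      · show (1 / 2 : ℝ) • z + (1 / 2 : ℝ) • z = z
        rw [← add_smul]; norm_num
      · show (1 / 2 : ℝ) * 0 + (1 / 2 : ℝ) * 1 = 1 / 2
        norm_num
    obtain ⟨y, hy, hyval⟩ := hseg ⟨(z, 0), hz0X⟩ ⟨(z, 1), hz1X⟩ hsegmem
    have hyeq : y = (⟨(z, 1 / 2), hmX⟩ : X) := Subtype.ext hyval
    rw [hyeq] at hy
    rcases hy with hy | hy
    · exact H₀ z hdz0 hz0X hmX hy
    · exact H₁ z hdz1 hz1X hmX hy
  refine ⟨hconv, hNU, ?_⟩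
  rintro ⟨Φ, hcont, hseg⟩
  apply hNU
  refine ⟨Φ, ?_, hseg⟩
  intro U hU
  have hop : @IsOpen _ (vietorisTopology ↥X) {K : NonemptyCompacts ↥X | (K : Set ↥X) ⊆ U} :=
    isOpen_generateFrom_of_mem (Or.inl ⟨U, hU, rfl⟩)
  exact @Continuous.isOpen_preimage _ _ _ (vietorisTopology ↥X) Φ hcont _ hop
end

section
/- Let X be a normal topological space, C a contractible completely regular Hausdorff (Tychonoff) space, {U_i}_{i ∈ I} a locally finite open cover of X, and {F_i}_{i ∈ I} a family of closed subsets of X with F_i ⊆ U_i for all i ∈ I. Then for any family of continuous maps Φ_i : U_i → exp(C) (i ∈ I) there exists a continuous map Φ : X → exp(C) such that Φ_i(x) ⊆ Φ(x) for all x ∈ F_i and all i ∈ I. -/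
open TopologicalSpace Set
open scoped Classical

section Aux

variable {α C : Type*} [TopologicalSpace α] [TopologicalSpace C]

/-- Vietoris continuity unpacked as upper + lower semicontinuity. -/
def VCont (f : α → NonemptyCompacts C) : Prop :=
  (∀ W : Set C, IsOpen W → IsOpen {x | (f x : Set C) ⊆ W}) ∧
  (∀ W : Set C, IsOpen W → IsOpen {x | ((f x : Set C) ∩ W).Nonempty})

lemma vcont_iff {f : α → NonemptyCompacts C} :
    @Continuous _ _ _ (vietorisTopology C) f ↔ VCont f := by
  rw [show vietorisTopology C = generateFrom _ from rfl, continuous_generateFrom_iff]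
  constructor
  · intro h
    exact ⟨fun W hW => h _ (Or.inl ⟨W, hW, rfl⟩), fun W hW => h _ (Or.inr ⟨W, hW, rfl⟩)⟩
  · rintro ⟨h1, h2⟩ s (⟨W, hW, rfl⟩ | ⟨W, hW, rfl⟩)
    · exact h1 W hW
    · exact h2 W hW

/-- Gluing a map on an open set with a constant outside a smaller set preserves
openness conditions. -/
lemma isOpen_glue {U : Set α} (hU : IsOpen U) {V : Set α} (hV : closure V ⊆ U)
    (B : U → NonemptyCompacts C) (K₀ : NonemptyCompacts C)
    (hBV : ∀ u : U, (u : α) ∉ V → B u = K₀) (P : NonemptyCompacts C → Prop)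
    (hP : IsOpen {u : U | P (B u)}) :
    IsOpen {x | P (if h : x ∈ U then B ⟨x, h⟩ else K₀)} := by
  rw [isOpen_iff_mem_nhds]
  intro x hx
  simp only [mem_setOf_eq] at hx
  by_cases hxU : x ∈ U
  · obtain ⟨T, hT, hTe⟩ := isOpen_induced_iff.1 hP
    have hxT : x ∈ T := by
      have h1 : (⟨x, hxU⟩ : U) ∈ {u : U | P (B u)} := by
        simp only [mem_setOf_eq]
        rw [dif_pos hxU] at hx; exact hx
      rw [← hTe] at h1; exact h1
    refine Filter.mem_of_superset ((hU.inter hT).mem_nhds ⟨hxU, hxT⟩) ?_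
    intro y hy
    have h2 : (⟨y, hy.1⟩ : U) ∈ Subtype.val ⁻¹' T := hy.2
    rw [hTe] at h2
    simp only [mem_setOf_eq]
    rw [dif_pos hy.1]
    exact h2
  · have hPK : P K₀ := by rw [dif_neg hxU] at hx; exact hx
    refine Filter.mem_of_superset ((isClosed_closure (s := V)).isOpen_compl.mem_nhds
      (fun hc => hxU (hV hc))) ?_
    intro y hy
    have hyV : y ∉ V := fun h => hy (subset_closure h)
    simp only [mem_setOf_eq]
    by_cases hyU : y ∈ U
    · rw [dif_pos hyU, hBV ⟨y, hyU⟩ hyV]; exact hPK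
    · rw [dif_neg hyU]; exact hPK

/-- The set `{c₀} ∪ g(K × [l,1])` as a nonempty compact set. -/
def homImage (g : C × ℝ → C) (hg : Continuous g) (c₀ : C) (l : ℝ) (K : NonemptyCompacts C) :
    NonemptyCompacts C :=
  ⟨⟨insert c₀ (g '' ((K : Set C) ×ˢ Icc l 1)),
    ((K.isCompact.prod isCompact_Icc).image hg).insert c₀⟩, insert_nonempty _ _⟩

lemma homImage_coe (g : C × ℝ → C) (hg : Continuous g) (c₀ : C) (l : ℝ) (K : NonemptyCompacts C) :
    (homImage g hg c₀ l K : Set C) = insert c₀ (g '' ((K : Set C) ×ˢ Icc l 1)) := rfl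

/-- The key continuity lemma: `x ↦ {c₀} ∪ g((f x) × [l x, 1])` is Vietoris continuous. -/
lemma vcont_homImage (g : C × ℝ → C) (hg : Continuous g) (c₀ : C)
    {l : α → ℝ} (hl : Continuous l) (hl1 : ∀ x, l x ≤ 1)
    {f : α → NonemptyCompacts C} (hf : VCont f) :
    VCont (fun x => homImage g hg c₀ (l x) (f x)) := by
  constructor
  · -- upper semicontinuity
    intro W hW
    rw [isOpen_iff_mem_nhds]
    intro x₀ hx₀
    simp only [mem_setOf_eq, homImage_coe, insert_subset_iff] at hx₀
    obtain ⟨hc₀W, himg⟩ := hx₀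
    have hsub : (f x₀ : Set C) ×ˢ Icc (l x₀) 1 ⊆ g ⁻¹' W := by
      intro p hp; exact himg ⟨p, hp, rfl⟩
    obtain ⟨N, J, hN, hJ, hKN, hIJ, hNJ⟩ :=
      generalized_tube_lemma (f x₀).isCompact isCompact_Icc (hW.preimage hg) hsub
    obtain ⟨δ, hδ, hth⟩ := isCompact_Icc.exists_thickening_subset_open hJ hIJ
    have hJ' : ∀ s', l x₀ - δ < s' → Icc s' 1 ⊆ J := by
      intro s' hs' t ht
      refine hth (Metric.mem_thickening_iff.2 ⟨max t (l x₀), ⟨le_max_right _ _,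
        max_le ht.2 (hl1 x₀)⟩, ?_⟩)
      rw [Real.dist_eq]
      rcases le_total (l x₀) t with h | h
      · rw [max_eq_left h]; simpa using hδ
      · rw [max_eq_right h, abs_of_nonpos (by linarith)]
        have := ht.1; linarith
    refine Filter.mem_of_superset (((hf.1 N hN).inter
      ((isOpen_Ioi (a := l x₀ - δ)).preimage hl)).mem_nhds ⟨hKN, by simp only [mem_preimage, mem_Ioi]; linarith⟩) ?_
    intro x hx
    simp only [mem_setOf_eq, homImage_coe, insert_subset_iff]
    refine ⟨hc₀W, ?_⟩
    rintro _ ⟨⟨c, t⟩, ⟨hc, ht⟩, rfl⟩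
    exact hNJ ⟨hx.1 hc, hJ' (l x) hx.2 ht⟩
  · -- lower semicontinuity
    intro W hW
    rw [isOpen_iff_mem_nhds]
    intro x₀ hx₀
    obtain ⟨c', hc'mem, hc'W⟩ := hx₀
    rw [homImage_coe, mem_insert_iff] at hc'mem
    rcases hc'mem with rfl | ⟨⟨c, t⟩, ⟨hcK, htI⟩, rfl⟩
    · -- c' = c₀ : every value works
      refine Filter.mem_of_superset Filter.univ_mem ?_
      intro x _
      exact ⟨c', mem_insert _ _, hc'W⟩
    · obtain ⟨N, J, hN, hJ, hcN, htJ, hNJ⟩ :=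
        isOpen_prod_iff.1 (hW.preimage hg) c t (by exact hc'W)
      obtain ⟨δ, hδ, hball⟩ := Metric.isOpen_iff.1 hJ t htJ
      refine Filter.mem_of_superset (((hf.2 N hN).inter
        ((isOpen_Iio (a := t + δ)).preimage hl)).mem_nhds ⟨⟨c, hcK, hcN⟩, ?_⟩) ?_
      · simp only [mem_preimage, mem_Iio]
        have := htI.1; linarith
      · intro x hx
        obtain ⟨⟨c'', hc''f, hc''N⟩, hlx⟩ := hx
        simp only [mem_preimage, mem_Iio] at hlx
        have ht''J : max (l x) t ∈ J := by
          rcases le_total (l x) t with h | h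
          · rw [max_eq_right h]; exact htJ
          · rw [max_eq_left h]
            refine hball ?_
            rw [Metric.mem_ball, Real.dist_eq, abs_of_nonneg (by linarith)]
            linarith
        refine ⟨g (c'', max (l x) t), ?_, hNJ ⟨hc''N, ht''J⟩⟩
        rw [homImage_coe]
        exact mem_insert_of_mem _ ⟨(c'', max (l x) t),
          ⟨hc''f, le_max_left _ _, max_le (hl1 x) htI.2⟩, rfl⟩

end Aux


/-- Gluing lemma: given a normal space `X`, a contractible Tychonoff space `C`,
a locally finite open cover `U i` of `X`, closed sets `F i ⊆ U i`, and continuous maps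
`Φs i : U i → exp C`, there is a continuous map `Φ : X → exp C` with
`Φs i x ⊆ Φ x` for all `x ∈ F i`. -/
theorem exists_continuous_hyperspace_map_extending
    {X C : Type*} [TopologicalSpace X] [NormalSpace X]
    [TopologicalSpace C] [CompletelyRegularSpace C] [T2Space C] [ContractibleSpace C]
    {I : Type*} (U : I → Set X) (hUopen : ∀ i, IsOpen (U i))
    (hUcover : ⋃ i, U i = univ) (hUlf : LocallyFinite U)
    (F : I → Set X) (hFclosed : ∀ i, IsClosed (F i)) (hFU : ∀ i, F i ⊆ U i)
    (Φs : ∀ i, (U i) → NonemptyCompacts C)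
    (hΦs : ∀ i, @Continuous _ _ _ (vietorisTopology C) (Φs i)) :
    ∃ Φ : X → NonemptyCompacts C,
      @Continuous _ _ _ (vietorisTopology C) Φ ∧
      ∀ i, ∀ x, ∀ hx : x ∈ F i, (Φs i ⟨x, hFU i hx⟩ : Set C) ⊆ (Φ x : Set C) := by
  -- contraction homotopy
  obtain ⟨c₀, hhom⟩ := id_nullhomotopic C
  obtain ⟨H⟩ := hhom
  set g : C × ℝ → C := fun p => H (Set.projIcc 0 1 zero_le_one p.2, p.1) with hg_def
  have hg : Continuous g :=
    H.continuous.comp ((continuous_projIcc.comp continuous_snd).prodMk continuous_fst)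
  have hg0 : ∀ c : C, g (c, 0) = c := by
    intro c
    have : Set.projIcc (0:ℝ) 1 zero_le_one 0 = 0 := by
      rw [Set.projIcc_left]; rfl
    simp only [hg_def]
    rw [this]
    exact H.apply_zero c
  have hg1 : ∀ (c : C) (t : ℝ), 1 ≤ t → g (c, t) = c₀ := by
    intro c t ht
    have : Set.projIcc (0:ℝ) 1 zero_le_one t = 1 := by
      rw [Set.projIcc_of_right_le zero_le_one ht]; rfl
    simp only [hg_def]
    rw [this]
    exact H.apply_one c
  -- Urysohn functions
  have hsep : ∀ i, ∃ (V : Set X) (l : C(X, ℝ)), closure V ⊆ U i ∧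
      EqOn ⇑l 0 (F i) ∧ EqOn ⇑l 1 Vᶜ ∧ ∀ x, l x ∈ Icc (0:ℝ) 1 := by
    intro i
    obtain ⟨V, hVopen, hFV, hVU⟩ := normal_exists_closure_subset (hFclosed i) (hUopen i) (hFU i)
    obtain ⟨l, hl0, hl1, hl01⟩ := exists_continuous_zero_one_of_isClosed (hFclosed i)
      hVopen.isClosed_compl (disjoint_compl_right.mono_left hFV)
    exact ⟨V, l, hVU, hl0, hl1, hl01⟩
  choose V l hVU hl0 hl1 hl01 using hsep
  -- constant singleton
  set pt : NonemptyCompacts C := ⟨⟨{c₀}, isCompact_singleton⟩, singleton_nonempty _⟩ with hpt_def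
  -- the local maps
  set A : I → X → NonemptyCompacts C := fun i x =>
    if h : x ∈ U i then homImage g hg c₀ (l i x) (Φs i ⟨x, h⟩) else pt with hA_def
  have hAc₀ : ∀ i x, c₀ ∈ (A i x : Set C) := by
    intro i x
    simp only [hA_def]
    by_cases h : x ∈ U i
    · rw [dif_pos h]; exact mem_insert _ _
    · rw [dif_neg h]; exact rfl
  have hAout : ∀ i x, x ∉ U i → (A i x : Set C) = {c₀} := by
    intro i x h
    simp only [hA_def]
    rw [dif_neg h]; rfl
  -- Vietoris continuity of each A i
  have hAcont : ∀ i, VCont (A i) := by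
    intro i
    have hBV : ∀ u : (U i), (u : X) ∉ V i → homImage g hg c₀ (l i u) (Φs i u) = pt := by
      intro u hu
      have h1 : l i u = 1 := hl1 i hu
      apply NonemptyCompacts.ext
      rw [homImage_coe, hpt_def]
      apply Subset.antisymm
      · rintro c (rfl | ⟨⟨c', t⟩, ⟨_, ht⟩, rfl⟩)
        · exact rfl
        · have : (1:ℝ) ≤ t := h1 ▸ ht.1
          simp [hg1 c' t this]
      · intro c hc
        have hcc : c = c₀ := hc
        subst hcc
        exact mem_insert _ _
    have hB : VCont (fun u : (U i) => homImage g hg c₀ (l i u) (Φs i u)) :=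
      vcont_homImage g hg c₀ ((l i).continuous.comp continuous_subtype_val)
        (fun u => (hl01 i u).2) (vcont_iff.1 (hΦs i))
    constructor
    · intro W hW
      exact isOpen_glue (hUopen i) (hVU i) _ pt hBV (fun K => (K : Set C) ⊆ W) (hB.1 W hW)
    · intro W hW
      exact isOpen_glue (hUopen i) (hVU i) _ pt hBV
        (fun K => ((K : Set C) ∩ W).Nonempty) (hB.2 W hW)
  -- assembling Φ
  have hcompact : ∀ x, IsCompact (insert c₀ (⋃ i, (A i x : Set C))) := by
    intro x
    have hT := hUlf.point_finite x
    have he : insert c₀ (⋃ i, (A i x : Set C)) =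
        insert c₀ (⋃ i ∈ {j | x ∈ U j}, (A i x : Set C)) := by
      apply Subset.antisymm
      · rintro c (rfl | hc)
        · exact mem_insert _ _
        · obtain ⟨i, hi⟩ := mem_iUnion.1 hc
          by_cases h : x ∈ U i
          · exact mem_insert_of_mem _ (mem_biUnion h hi)
          · rw [hAout i x h, mem_singleton_iff] at hi
            subst hi; exact mem_insert _ _
      · rintro c (rfl | hc)
        · exact mem_insert _ _
        · obtain ⟨i, _, hi⟩ := mem_iUnion₂.1 hc
          exact mem_insert_of_mem _ (mem_iUnion.2 ⟨i, hi⟩)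
    rw [he]
    exact (hT.isCompact_biUnion (fun i _ => (A i x).isCompact)).insert c₀
  set Φ : X → NonemptyCompacts C := fun x =>
    ⟨⟨insert c₀ (⋃ i, (A i x : Set C)), hcompact x⟩, insert_nonempty _ _⟩ with hΦ_def
  have hΦcoe : ∀ x, (Φ x : Set C) = insert c₀ (⋃ i, (A i x : Set C)) := fun x => rfl
  have hAsub : ∀ i x, (A i x : Set C) ⊆ (Φ x : Set C) := by
    intro i x
    rw [hΦcoe]
    exact (subset_iUnion (fun i => (A i x : Set C)) i).trans (subset_insert _ _)
  refine ⟨Φ, vcont_iff.2 ⟨?_, ?_⟩, ?_⟩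
  · -- upper semicontinuity of Φ
    intro W hW
    rw [isOpen_iff_mem_nhds]
    intro x₀ hx₀
    simp only [mem_setOf_eq] at hx₀
    obtain ⟨O, hO, hsfin⟩ := hUlf x₀
    have hc₀W : c₀ ∈ W := hx₀ (by rw [hΦcoe]; exact mem_insert _ _)
    refine Filter.mem_of_superset (Filter.inter_mem hO ((Filter.biInter_mem hsfin).2
      (fun i _ => ((hAcont i).1 W hW).mem_nhds ((hAsub i x₀).trans hx₀)))) ?_
    intro x hx
    obtain ⟨hxO, hxI⟩ := hx
    simp only [mem_setOf_eq]
    rw [hΦcoe]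
    rintro c (rfl | hc)
    · exact hc₀W
    · obtain ⟨i, hi⟩ := mem_iUnion.1 hc
      by_cases h : x ∈ U i
      · have hiS : (U i ∩ O).Nonempty := ⟨x, h, hxO⟩
        have := mem_iInter₂.1 hxI i hiS
        exact this hi
      · rw [hAout i x h, mem_singleton_iff] at hi
        subst hi; exact hc₀W
  · -- lower semicontinuity of Φ
    intro W hW
    rw [isOpen_iff_mem_nhds]
    intro x₀ hx₀
    obtain ⟨c, hcΦ, hcW⟩ := hx₀
    rw [hΦcoe, mem_insert_iff] at hcΦ
    rcases hcΦ with rfl | hc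
    · refine Filter.mem_of_superset Filter.univ_mem ?_
      intro x _
      exact ⟨c, by rw [hΦcoe]; exact mem_insert _ _, hcW⟩
    · obtain ⟨i, hi⟩ := mem_iUnion.1 hc
      refine Filter.mem_of_superset (((hAcont i).2 W hW).mem_nhds ⟨c, hi, hcW⟩) ?_
      rintro x ⟨c', hc'A, hc'W⟩
      exact ⟨c', hAsub i x hc'A, hc'W⟩
  · -- extension property
    intro i x hx
    have hxU : x ∈ U i := hFU i hx
    intro c hc
    refine hAsub i x ?_
    simp only [hA_def]
    rw [dif_pos hxU, homImage_coe]
    refine mem_insert_of_mem _ ⟨(c, 0), ⟨hc, ?_⟩, hg0 c⟩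
    have h0 : l i x = 0 := hl0 i hx
    exact ⟨h0.le, zero_le_one⟩
end

section
/- Every locally compact, σ-compact convex subset of a real topological vector space is compactly convex. -/
open TopologicalSpace Set

set_option linter.unusedSectionVars false

set_option linter.unusedTactic false

section ConeAux

variable {L : Type*} [TopologicalSpace L] [AddCommGroup L] [Module ℝ L]
  [IsTopologicalAddGroup L] [ContinuousSMul ℝ L]

/-- The affine combination map used to build cones. -/
def cmap (b : L) : ℝ × L → L := fun p => (1 - p.1) • b + p.1 • p.2

lemma cmap_cont (b : L) : Continuous (cmap b) :=
  ((continuous_const.sub continuous_fst).smul continuous_const).add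
    (continuous_fst.smul continuous_snd)

/-- The cone with apex `b`, scale `s`, over the set `A`. -/
def cone (b : L) (s : ℝ) (A : Set L) : Set L := cmap b '' (Icc 0 s ×ˢ A)

lemma cone_mono (b : L) {s s' : ℝ} {A A' : Set L} (hs : s ≤ s') (hA : A ⊆ A') :
    cone b s A ⊆ cone b s' A' :=
  image_mono (prod_mono (Icc_subset_Icc le_rfl hs) hA)

lemma cone_compact (b : L) (s : ℝ) {A : Set L} (hA : IsCompact A) :
    IsCompact (cone b s A) :=
  (isCompact_Icc.prod hA).image (cmap_cont b)

lemma cone_subset_convex {X : Set L} (hX : Convex ℝ X) {b : L} (hb : b ∈ X)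
    {A : Set L} (hA : A ⊆ X) {s : ℝ} (hs : s ≤ 1) : cone b s A ⊆ X := by
  rintro _ ⟨⟨u, a⟩, ⟨⟨h0, h1⟩, ha⟩, rfl⟩
  exact hX hb (hA ha) (by simp only; linarith) h0 (by ring)

lemma mem_cone_self {b : L} {A : Set L} {a : L} (ha : a ∈ A) {s : ℝ} (hs : 0 ≤ s) :
    b ∈ cone b s A :=
  ⟨(0, a), ⟨⟨le_refl _, hs⟩, ha⟩, by simp [cmap]⟩

lemma subset_cone_one (b : L) (A : Set L) : A ⊆ cone b 1 A := fun a ha =>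
  ⟨(1, a), ⟨⟨zero_le_one, le_refl _⟩, ha⟩, by simp [cmap]⟩

/-- The interpolating family of cones over an increasing family of sets. -/
def coneFam (b : L) (A : ℕ → Set L) (t : ℝ) : Set L :=
  cone b 1 (A ⌊t⌋₊) ∪ cone b (t - ⌊t⌋₊) (A (⌊t⌋₊ + 1))

lemma frac_le_one (t : ℝ) : t - ⌊t⌋₊ ≤ 1 := by
  have := Nat.lt_floor_add_one t; linarith

lemma coneFam_mono {b : L} {A : ℕ → Set L} (hA : Monotone A) : Monotone (coneFam b A) := by
  intro t t' htt'
  have hfl : ⌊t⌋₊ ≤ ⌊t'⌋₊ := Nat.floor_mono htt'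
  rcases eq_or_lt_of_le hfl with h | h
  · unfold coneFam
    rw [← h]
    exact union_subset_union subset_rfl (cone_mono b (by linarith) subset_rfl)
  · refine subset_trans ?_ (subset_union_left (t := cone b (t' - ⌊t'⌋₊) (A (⌊t'⌋₊ + 1))))
    refine union_subset (cone_mono b le_rfl (hA hfl)) ?_
    exact cone_mono b (frac_le_one t) (hA h)

lemma coneFam_compact {b : L} {A : ℕ → Set L} (hA : ∀ n, IsCompact (A n)) (t : ℝ) :
    IsCompact (coneFam b A t) :=
  (cone_compact b _ (hA _)).union (cone_compact b _ (hA _))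

lemma coneFam_subset {X : Set L} (hX : Convex ℝ X) {b : L} (hb : b ∈ X)
    {A : ℕ → Set L} (hA : ∀ n, A n ⊆ X) (t : ℝ) : coneFam b A t ⊆ X :=
  union_subset (cone_subset_convex hX hb (hA _) le_rfl)
    (cone_subset_convex hX hb (hA _) (frac_le_one t))

lemma mem_coneFam_self {b : L} {A : ℕ → Set L} (hbA : ∀ n, b ∈ A n) (t : ℝ) :
    b ∈ coneFam b A t :=
  Or.inl (mem_cone_self (hbA _) zero_le_one)

lemma coneFam_upper {b : L} {A : ℕ → Set L} (hA : ∀ n, IsCompact (A n)) {t : ℝ}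
    {O : Set L} (hO : IsOpen O) (hsub : coneFam b A t ⊆ O) :
    ∃ δ > 0, coneFam b A (t + δ) ⊆ O := by
  rcases lt_or_ge t 0 with ht | ht
  · refine ⟨-t / 2, by linarith, ?_⟩
    have h1 : ⌊t⌋₊ = 0 := Nat.floor_of_nonpos ht.le
    have h2 : ⌊t + -t / 2⌋₊ = 0 := Nat.floor_of_nonpos (by linarith)
    unfold coneFam at hsub ⊢
    rw [h2]
    rw [h1] at hsub
    refine union_subset (subset_union_left.trans hsub) ?_
    have he : Icc (0 : ℝ) (t + -t / 2 - (0 : ℕ)) = ∅ := Icc_eq_empty (by push_cast; linarith)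
    rw [cone, he]
    simp
  · set n := ⌊t⌋₊ with hn
    have hnt : (n : ℝ) ≤ t := Nat.floor_le ht
    have hn1 : t < n + 1 := Nat.lt_floor_add_one t
    have hpre : Icc (0 : ℝ) (t - n) ×ˢ A (n + 1) ⊆ cmap b ⁻¹' O := by
      rw [← image_subset_iff]
      exact subset_trans (subset_union_right) hsub
    obtain ⟨u, v, hu, hv, hIu, hAv, huv⟩ := generalized_tube_lemma isCompact_Icc (hA (n + 1))
      (hO.preimage (cmap_cont b)) hpre
    have hs : t - n ∈ u := hIu ⟨by linarith, le_refl _⟩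
    obtain ⟨ε, hε, hball⟩ := Metric.isOpen_iff.mp hu _ hs
    refine ⟨min (ε / 2) ((n + 1 - t) / 2), lt_min (by linarith) (by linarith), ?_⟩
    set δ := min (ε / 2) ((n + 1 - t) / 2) with hδdef
    have hδ1 : δ ≤ ε / 2 := min_le_left _ _
    have hδ2 : δ ≤ (n + 1 - t) / 2 := min_le_right _ _
    have hδpos : 0 < δ := lt_min (by linarith) (by linarith)
    have hfl : ⌊t + δ⌋₊ = n := by
      rw [Nat.floor_eq_iff (by linarith)]
      exact ⟨by linarith, by push_cast; linarith⟩
    unfold coneFam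
    rw [hfl]
    refine union_subset (subset_union_left.trans hsub) ?_
    rintro _ ⟨⟨u', q⟩, ⟨⟨hu'0, hu'1⟩, hq⟩, rfl⟩
    refine huv ⟨?_, hAv hq⟩
    rcases le_or_gt u' (t - n) with h | h
    · exact hIu ⟨hu'0, h⟩
    · apply hball
      rw [Metric.mem_ball, Real.dist_eq, abs_lt]
      constructor <;> [linarith; linarith]

lemma coneFam_lower {b : L} {A : ℕ → Set L} (hA : Monotone A) (hbA : ∀ n, b ∈ A n) {t : ℝ}
    {p : L} (hp : p ∈ coneFam b A t) {O : Set L} (hO : IsOpen O) (hpO : p ∈ O) :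
    ∃ δ > 0, ∀ t', t - δ < t' → (coneFam b A t' ∩ O).Nonempty := by
  have hmono := coneFam_mono (b := b) hA
  rcases hp with hp | hp
  · obtain ⟨⟨u, a⟩, ⟨⟨hu0, hu1⟩, ha⟩, rfl⟩ := hp
    rcases Nat.eq_zero_or_eq_succ_pred ⌊t⌋₊ with hn | hn
    · refine ⟨1, one_pos, fun t' _ => ?_⟩
      refine ⟨cmap b (u, a), Or.inl ⟨(u, a), ⟨⟨hu0, hu1⟩, ?_⟩, rfl⟩, hpO⟩
      exact hA (Nat.zero_le _) (hn ▸ ha)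
    · set m := ⌊t⌋₊ - 1 with hm
      rw [hn] at ha
      have hflm : ⌊t⌋₊ = m + 1 := hn
      have ht0 : 0 ≤ t := by
        by_contra hcon
        push_neg at hcon
        rw [Nat.floor_of_nonpos hcon.le] at hflm
        exact Nat.succ_ne_zero m hflm.symm
      have hnt : ((m : ℝ) + 1) ≤ t := by
        have := Nat.floor_le ht0
        rw [hflm] at this
        push_cast at this
        linarith
      have hn1 : t < (m : ℝ) + 2 := by
        have := Nat.lt_floor_add_one t
        rw [hflm] at this
        push_cast at this
        linarith
      have hcont : Continuous fun u' : ℝ => cmap b (u', a) :=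
        (cmap_cont b).comp (continuous_id.prodMk continuous_const)
      have hmem : u ∈ (fun u' : ℝ => cmap b (u', a)) ⁻¹' O := hpO
      obtain ⟨η, hη, hball⟩ := Metric.isOpen_iff.mp (hO.preimage hcont) u hmem
      refine ⟨min η 1, lt_min hη one_pos, fun t' ht' => ?_⟩
      have hδη : min η 1 ≤ η := min_le_left _ _
      have hδ1 : min η 1 ≤ 1 := min_le_right _ _
      rcases le_or_gt t t' with h | h
      · exact ⟨cmap b (u, a),
          hmono h (Or.inl ⟨(u, a), ⟨⟨hu0, hu1⟩, hflm ▸ ha⟩, rfl⟩), hpO⟩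
      · rcases le_or_gt ((m : ℝ) + 1) t' with h2 | h2
        · have hle : (m + 1 : ℕ) ≤ ⌊t'⌋₊ := Nat.le_floor (by push_cast; linarith)
          exact ⟨cmap b (u, a), Or.inl ⟨(u, a), ⟨⟨hu0, hu1⟩, hA hle ha⟩, rfl⟩, hpO⟩
        · have htm : (m : ℝ) < t' := by linarith
          have ht'0 : 0 ≤ t' := le_of_lt (lt_of_le_of_lt (Nat.cast_nonneg m) htm)
          have hfl' : ⌊t'⌋₊ = m := by
            rw [Nat.floor_eq_iff ht'0]
            exact ⟨htm.le, by push_cast; linarith⟩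
          set s'' := t' - (m : ℝ) with hs''
          have hs''pos : 0 < s'' := by rw [hs'']; linarith
          set u' := min u s'' with hu'
          have hu'0 : 0 ≤ u' := le_min hu0 hs''pos.le
          have hu'le : u' ≤ s'' := min_le_right _ _
          have hmemF : cmap b (u', a) ∈ coneFam b A t' := by
            right
            refine ⟨(u', a), ⟨⟨hu'0, ?_⟩, ?_⟩, rfl⟩
            · rw [hfl']; exact hu'le
            · rw [hfl']; exact ha
          have hs''gt : u - η < s'' := by rw [hs'']; linarith
          have huu' : u - η < u' := lt_min (by linarith) hs''gt
          refine ⟨cmap b (u', a), hmemF, hball ?_⟩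
          rw [Metric.mem_ball, Real.dist_eq, abs_lt]
          have : u' ≤ u := min_le_left _ _
          constructor <;> linarith
  · obtain ⟨⟨u, a⟩, ⟨⟨hu0, hus⟩, ha⟩, rfl⟩ := hp
    set n := ⌊t⌋₊ with hn
    rcases le_or_gt (t - n) 0 with hs0 | hs0
    · have hu : u = 0 := le_antisymm (hus.trans hs0) hu0
      refine ⟨1, one_pos, fun t' _ => ⟨cmap b (u, a), ?_, hpO⟩⟩
      have hb' : cmap b (u, a) = b := by rw [hu]; simp [cmap]
      rw [hb']
      exact Or.inl (mem_cone_self (hbA _) zero_le_one)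
    · have ht0 : 0 ≤ t := le_of_lt (lt_of_le_of_lt (Nat.cast_nonneg n) (by linarith))
      have hnt : (n : ℝ) ≤ t := Nat.floor_le ht0
      have hn1 : t < (n : ℝ) + 1 := Nat.lt_floor_add_one t
      have hcont : Continuous fun u' : ℝ => cmap b (u', a) :=
        (cmap_cont b).comp (continuous_id.prodMk continuous_const)
      have hmem : u ∈ (fun u' : ℝ => cmap b (u', a)) ⁻¹' O := hpO
      obtain ⟨η, hη, hball⟩ := Metric.isOpen_iff.mp (hO.preimage hcont) u hmem
      refine ⟨min η (t - n), lt_min hη hs0, fun t' ht' => ?_⟩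
      have hδη : min η (t - n) ≤ η := min_le_left _ _
      have hδs : min η (t - n) ≤ t - n := min_le_right _ _
      rcases le_or_gt t t' with h | h
      · exact ⟨cmap b (u, a), hmono h (Or.inr ⟨(u, a), ⟨⟨hu0, hus⟩, ha⟩, rfl⟩), hpO⟩
      · have htn : (n : ℝ) < t' := by linarith
        have ht'0 : 0 ≤ t' := le_of_lt (lt_of_le_of_lt (Nat.cast_nonneg n) htn)
        have hfl' : ⌊t'⌋₊ = n := by
          rw [Nat.floor_eq_iff ht'0]
          exact ⟨htn.le, by push_cast; linarith⟩
        set s'' := t' - (n : ℝ) with hs''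
        have hs''pos : 0 < s'' := by rw [hs'']; linarith
        set u' := min u s'' with hu'
        have hu'0 : 0 ≤ u' := le_min hu0 hs''pos.le
        have hu'le : u' ≤ s'' := min_le_right _ _
        have hmemF : cmap b (u', a) ∈ coneFam b A t' := by
          right
          refine ⟨(u', a), ⟨⟨hu'0, ?_⟩, ?_⟩, rfl⟩
          · rw [hfl']; exact hu'le
          · rw [hfl']; exact ha
        have hs''gt : u - η < s'' := by rw [hs'']; linarith
        have huu' : u - η < u' := lt_min (by linarith) hs''gt
        refine ⟨cmap b (u', a), hmemF, hball ?_⟩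
        rw [Metric.mem_ball, Real.dist_eq, abs_lt]
        have : u' ≤ u := min_le_left _ _
        constructor <;> linarith

end ConeAux

/-- Every locally compact, σ-compact convex subset of a real topological vector space
is compactly convex. -/
theorem locallyCompact_sigmaCompact_convex_isCompactlyConvex
    {L : Type*} [TopologicalSpace L] [AddCommGroup L] [Module ℝ L]
    [IsTopologicalAddGroup L] [ContinuousSMul ℝ L]
    (X : Set L) (hconv : Convex ℝ X) (hlc : LocallyCompactSpace X)
    (hsc : IsSigmaCompact X) : IsCompactlyConvex X := by
  classical
  rcases X.eq_empty_or_nonempty with rfl | hne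
  · refine ⟨isEmptyElim, continuous_def.mpr fun s _ => ?_, fun x => isEmptyElim x⟩
    rw [Set.eq_empty_of_isEmpty (isEmptyElim ⁻¹' s)]
    exact isOpen_empty
  obtain ⟨x₀, hx₀⟩ := hne
  haveI : SigmaCompactSpace ↥X := isSigmaCompact_iff_sigmaCompactSpace.mp hsc
  set K := CompactExhaustion.choice ↥X with hK
  -- Urysohn functions
  have hury : ∀ n : ℕ, ∃ f : C(↥X, ℝ), EqOn f 0 (interior (K (n + 1)))ᶜ ∧ EqOn f 1 (K n) ∧
      ∀ x, f x ∈ Icc (0 : ℝ) 1 := fun n =>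
    exists_continuous_zero_one_of_isCompact' (K.isCompact n) isOpen_interior.isClosed_compl
      (disjoint_compl_right_iff_subset.mpr (K.subset_interior_succ n))
  choose f hf0 hf1 hficc using hury
  set g : ↥X → ℝ := fun x => 1 + ∑' m, (1 - f m x) with hg
  have hterm0 : ∀ (x : ↥X) (N : ℕ), x ∈ K N → ∀ m, N ≤ m → 1 - f m x = 0 := by
    intro x N hx m hm
    have h1 : f m x = 1 := hf1 m (K.subset hm hx)
    rw [h1]; ring
  have hsummable : ∀ x : ↥X, Summable fun m => 1 - f m x := by
    intro x
    obtain ⟨N, hN⟩ := K.exists_mem x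
    exact summable_of_ne_finset_zero (s := Finset.range N) fun m hm =>
      hterm0 x N hN m (by simpa [Finset.mem_range, not_lt] using hm)
  have hnonneg : ∀ (x : ↥X) (m : ℕ), 0 ≤ 1 - f m x := by
    intro x m
    have := (hficc m x).2
    linarith
  have hglb : ∀ x : ↥X, (K.find x : ℝ) ≤ g x := by
    intro x
    rcases Nat.eq_zero_or_eq_succ_pred (K.find x) with h0 | hsucc
    · rw [h0, hg]
      have := tsum_nonneg (L := SummationFilter.unconditional ℕ) (hnonneg x)
      push_cast
      linarith
    · set k := K.find x - 1 with hk
      have hfind : K.find x = k + 1 := hsucc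
      have hsum : ∑ m ∈ Finset.range k, (1 - f m x) = k := by
        rw [Finset.sum_congr rfl fun m hm => ?_]
        · rw [Finset.sum_const, nsmul_eq_mul, mul_one, Finset.card_range]
        · have hmk : m < k := Finset.mem_range.mp hm
          have hnotmem : x ∉ K (m + 1) := by
            rw [K.mem_iff_find_le, hfind]
            omega
          have hnotint : x ∉ interior (K (m + 1)) := fun h => hnotmem (interior_subset h)
          have : f m x = 0 := hf0 m hnotint
          rw [this]; ring
      have hle : (k : ℝ) ≤ ∑' m, (1 - f m x) := by
        calc (k : ℝ) = ∑ m ∈ Finset.range k, (1 - f m x) := hsum.symm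
        _ ≤ _ := Summable.sum_le_tsum (Finset.range k) (fun m _ => hnonneg x m) (hsummable x)
      rw [hfind, hg]
      push_cast
      linarith
  have hgcont : Continuous g := by
    rw [continuous_iff_continuousAt]
    intro x
    obtain ⟨N, hN⟩ := K.exists_mem x
    have hxm : x ∈ interior (K (N + 1)) := K.subset_interior_succ N hN
    have heq : ∀ y ∈ interior (K (N + 1)),
        g y = 1 + ∑ m ∈ Finset.range (N + 1), (1 - f m y) := by
      intro y hy
      rw [hg]
      simp only
      congr 1
      exact tsum_eq_sum fun m hm =>
        hterm0 y (N + 1) (interior_subset hy) m (by simpa [Finset.mem_range, not_lt] using hm)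
    have hcont2 : Continuous fun y : ↥X => 1 + ∑ m ∈ Finset.range (N + 1), (1 - f m y) :=
      continuous_const.add (continuous_finset_sum _ fun m _ => continuous_const.sub (f m).continuous)
    exact hcont2.continuousAt.congr
      (Filter.eventuallyEq_of_mem (isOpen_interior.mem_nhds hxm) fun y hy => (heq y hy).symm)
  -- the increasing family of compact sets in L
  set A : ℕ → Set L := fun n => (Subtype.val '' (K n : Set ↥X)) ∪ {x₀} with hA
  have hAmono : Monotone A := fun m n h =>
    union_subset_union (image_mono (K.subset h)) subset_rfl
  have hAcomp : ∀ n, IsCompact (A n) := fun n =>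
    ((K.isCompact n).image continuous_subtype_val).union isCompact_singleton
  have hAX : ∀ n, A n ⊆ X := fun n =>
    union_subset (by rintro _ ⟨z, _, rfl⟩; exact z.2) (singleton_subset_iff.mpr hx₀)
  have hbA : ∀ n, x₀ ∈ A n := fun n => Or.inr rfl
  have hmemA : ∀ x : ↥X, (x : L) ∈ A (K.find x) := fun x => Or.inl ⟨x, K.mem_find x, rfl⟩
  set M : ℝ → Set L := coneFam x₀ A with hM
  have hMmono : Monotone M := coneFam_mono hAmono
  have hMcomp : ∀ t, IsCompact (M t) := coneFam_compact hAcomp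
  have hMX : ∀ t, M t ⊆ X := coneFam_subset hconv hx₀ hAX
  have hbM : ∀ t, x₀ ∈ M t := mem_coneFam_self hbA
  have hxM : ∀ x : ↥X, (x : L) ∈ M (g x) := by
    intro x
    have h1 : K.find x ≤ ⌊g x⌋₊ := Nat.le_floor (hglb x)
    exact Or.inl (subset_cone_one x₀ _ (hAmono h1 (hmemA x)))
  -- the fibers
  set Ψ : ↥X → Set L := fun x => cmap (x : L) '' (Icc (0 : ℝ) 1 ×ˢ M (g x)) with hΨ
  have hΨX : ∀ x, Ψ x ⊆ X := by
    rintro x _ ⟨⟨u, q⟩, ⟨⟨h0, h1⟩, hq⟩, rfl⟩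
    exact hconv x.2 (hMX _ hq) (by simp only; linarith) h0 (by ring)
  have hΨcomp : ∀ x, IsCompact (Ψ x) := fun x =>
    (isCompact_Icc.prod (hMcomp _)).image (cmap_cont _)
  have hxΨ : ∀ x : ↥X, (x : L) ∈ Ψ x := fun x =>
    ⟨(0, x₀), ⟨⟨le_refl _, zero_le_one⟩, hbM _⟩, by simp [cmap]⟩
  have hcomp' : ∀ x : ↥X, IsCompact (Subtype.val ⁻¹' Ψ x : Set ↥X) := by
    intro x
    rw [Topology.IsInducing.subtypeVal.isCompact_iff, Set.image_preimage_eq_inter_range,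
      Subtype.range_coe, inter_eq_self_of_subset_left (hΨX x)]
    exact hΨcomp x
  refine ⟨fun x => ⟨⟨Subtype.val ⁻¹' Ψ x, hcomp' x⟩, ⟨x, hxΨ x⟩⟩, ?_, ?_⟩
  · -- continuity
    refine continuous_generateFrom_iff.mpr ?_
    rintro S (⟨U, hU, rfl⟩ | ⟨U, hU, rfl⟩)
    · -- upper sets
      obtain ⟨V, hV, hVU⟩ := isOpen_induced_iff.mp hU
      have hiff : ∀ x : ↥X, (Subtype.val ⁻¹' Ψ x : Set ↥X) ⊆ U ↔ Ψ x ⊆ V := by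
        intro x
        constructor
        · intro h p hp
          have hz := h (show (⟨p, hΨX x hp⟩ : ↥X) ∈ _ from hp)
          rw [← hVU] at hz
          exact hz
        · intro h z hz
          rw [← hVU]
          exact h hz
      show IsOpen {x : ↥X | (Subtype.val ⁻¹' Ψ x : Set ↥X) ⊆ U}
      rw [isOpen_iff_mem_nhds]
      intro x hx
      have hx' : Ψ x ⊆ V := (hiff x).mp hx
      set G : L × (ℝ × L) → L := fun q => (1 - q.2.1) • q.1 + q.2.1 • q.2.2 with hG
      have hGcont : Continuous G :=
        ((continuous_const.sub (continuous_fst.comp continuous_snd)).smul continuous_fst).add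
          ((continuous_fst.comp continuous_snd).smul (continuous_snd.comp continuous_snd))
      have h1 : ({(x : L)} ×ˢ (Icc (0 : ℝ) 1 ×ˢ M (g x))) ⊆ G ⁻¹' V := by
        rintro ⟨y, u, q⟩ ⟨hy, hm⟩
        rcases hy with rfl
        exact hx' ⟨(u, q), hm, rfl⟩
      obtain ⟨N, W, hN, hW, hxN, hMW, hNW⟩ := generalized_tube_lemma isCompact_singleton
        (isCompact_Icc.prod (hMcomp _)) (hV.preimage hGcont) h1
      obtain ⟨I, O, hI, hO, hII, hOO, hIO⟩ := generalized_tube_lemma isCompact_Icc (hMcomp _) hW hMW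
      obtain ⟨δ, hδ, hMδ⟩ := coneFam_upper hAcomp hO hOO
      have hnb : (Subtype.val ⁻¹' N ∩ g ⁻¹' Iio (g x + δ)) ∈ nhds x :=
        ((hN.preimage continuous_subtype_val).inter
          ((isOpen_Iio).preimage hgcont)).mem_nhds ⟨hxN rfl, by simp; linarith⟩
      refine Filter.mem_of_superset hnb ?_
      rintro x' ⟨hxN', hxδ⟩
      refine (hiff x').mpr ?_
      rintro p ⟨⟨u, q⟩, ⟨hu, hq⟩, rfl⟩
      have hMsub : M (g x') ⊆ O := (hMmono (le_of_lt hxδ)).trans hMδ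
      exact hNW (show ((x' : L), (u, q)) ∈ N ×ˢ W from ⟨hxN', hIO ⟨hII hu, hMsub hq⟩⟩)
    · -- lower sets
      obtain ⟨V, hV, hVU⟩ := isOpen_induced_iff.mp hU
      have hiff : ∀ x : ↥X, ((Subtype.val ⁻¹' Ψ x : Set ↥X) ∩ U).Nonempty ↔
          (Ψ x ∩ V).Nonempty := by
        intro x
        constructor
        · rintro ⟨z, hzΦ, hzU⟩
          rw [← hVU] at hzU
          exact ⟨↑z, hzΦ, hzU⟩
        · rintro ⟨p, hpΨ, hpV⟩
          refine ⟨⟨p, hΨX x hpΨ⟩, hpΨ, ?_⟩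
          rw [← hVU]
          exact hpV
      show IsOpen {x : ↥X | ((Subtype.val ⁻¹' Ψ x : Set ↥X) ∩ U).Nonempty}
      rw [isOpen_iff_mem_nhds]
      intro x hx
      obtain ⟨p, hpΨ, hpV⟩ := (hiff x).mp hx
      obtain ⟨⟨u, q⟩, ⟨hu, hq⟩, rfl⟩ := hpΨ
      have hHcont : Continuous fun w : L × L => (1 - u) • w.1 + u • w.2 :=
        (continuous_const.smul continuous_fst).add (continuous_const.smul continuous_snd)
      have hmem : ((x : L), q) ∈ (fun w : L × L => (1 - u) • w.1 + u • w.2) ⁻¹' V := hpV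
      obtain ⟨N, O, hN, hO, hxN, hqO, hNO⟩ := isOpen_prod_iff.mp (hV.preimage hHcont) _ _ hmem
      obtain ⟨δ, hδ, hlow⟩ := coneFam_lower hAmono hbA hq hO hqO
      have hnb : (Subtype.val ⁻¹' N ∩ g ⁻¹' Ioi (g x - δ)) ∈ nhds x :=
        ((hN.preimage continuous_subtype_val).inter
          ((isOpen_Ioi).preimage hgcont)).mem_nhds ⟨hxN, by simp; linarith⟩
      refine Filter.mem_of_superset hnb ?_
      rintro x' ⟨hxN', hxδ⟩
      refine (hiff x').mpr ?_
      obtain ⟨q', hq', hq'O⟩ := hlow (g x') hxδ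
      exact ⟨cmap (↑x') (u, q'), ⟨(u, q'), ⟨hu, hq'⟩, rfl⟩,
        hNO (show ((x' : L), q') ∈ N ×ˢ O from ⟨hxN', hq'O⟩)⟩
  · -- segment property
    intro x y
    have key : ∀ x y : ↥X, g x ≤ g y → segment ℝ (x : L) (y : L) ⊆ Ψ y := by
      intro x y hgxy p hp
      obtain ⟨a, c, ha, hc, hac, rfl⟩ := hp
      refine ⟨(a, (x : L)), ⟨⟨ha, by linarith⟩, hMmono hgxy (hxM x)⟩, ?_⟩
      show (1 - a) • (y : L) + a • (x : L) = a • (x : L) + c • (y : L)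
      rw [show (1 : ℝ) - a = c by linarith]
      exact add_comm _ _
    have himg : Subtype.val ''
        ((Subtype.val ⁻¹' Ψ x : Set ↥X) ∪ (Subtype.val ⁻¹' Ψ y : Set ↥X)) = Ψ x ∪ Ψ y := by
      rw [← preimage_union, Set.image_preimage_eq_inter_range, Subtype.range_coe,
        inter_eq_self_of_subset_left (union_subset (hΨX x) (hΨX y))]
    show segment ℝ (x : L) (y : L) ⊆
      Subtype.val '' ((Subtype.val ⁻¹' Ψ x : Set ↥X) ∪ (Subtype.val ⁻¹' Ψ y : Set ↥X))
    rw [himg]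
    rcases le_total (g x) (g y) with h | h
    · exact (key x y h).trans subset_union_right
    · rw [segment_symm]
      exact (key y x h).trans subset_union_left
end

section
/- Let X be a nonempty upper compactly convex subset of a Hausdorff real topological vector space L. Then the closure of X in L is locally compact. -/
open TopologicalSpace Set Filter Topology

/-- Key step: every point of an upper compactly convex set `X` has an open neighborhood
whose intersection with `X` is contained in a compact set. -/
lemma aux_compact_nbhd {L : Type*} [TopologicalSpace L] [AddCommGroup L] [Module ℝ L]
    [IsTopologicalAddGroup L] [ContinuousSMul ℝ L] [T2Space L]
    (X : Set L)
    (Φ : X → NonemptyCompacts X)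
    (husc : ∀ U : Set X, IsOpen U → IsOpen {x : X | (Φ x : Set X) ⊆ U})
    (hseg : ∀ x y : X, segment ℝ (x : L) (y : L) ⊆
      Subtype.val '' ((Φ x : Set X) ∪ (Φ y : Set X)))
    (x₀ : L) (hx₀ : x₀ ∈ X) :
    ∃ V : Set L, IsOpen V ∧ x₀ ∈ V ∧ ∃ K : Set L, IsCompact K ∧ V ∩ X ⊆ K := by
  by_contra h
  push_neg at h
  -- the image map
  set F' : X → Set L := fun x => Subtype.val '' (Φ x : Set X) with hF'
  have hF'cpt : ∀ x : X, IsCompact (F' x) := fun x =>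
    (Φ x).isCompact.image continuous_subtype_val
  set x₀c : X := ⟨x₀, hx₀⟩ with hx₀c
  -- an ultrafilter converging to x₀, living on X, avoiding every compact set
  set F : Filter L := 𝓝 x₀ ⊓ Filter.principal X ⊓ Filter.cocompact L with hFdef
  have hFne : F.NeBot := by
    refine Filter.neBot_iff.mpr fun hbot => ?_
    have hmem : (∅ : Set L) ∈ F := by rw [hbot]; exact Filter.mem_bot
    rw [hFdef] at hmem
    rcases Filter.mem_inf_iff.mp hmem with ⟨s, hs, t, ht, hst⟩
    rcases Filter.mem_inf_iff.mp hs with ⟨a, ha, b, hb, hab⟩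
    rcases mem_nhds_iff.mp ha with ⟨V, hVa, hVo, hx₀V⟩
    rcases Filter.mem_cocompact.mp ht with ⟨K, hK, hKt⟩
    refine h V hVo hx₀V K hK fun w hw => ?_
    by_contra hwK
    have : w ∈ s ∩ t := ⟨hab ▸ ⟨hVa hw.1, Filter.mem_principal.mp hb hw.2⟩, hKt hwK⟩
    rw [← hst] at this
    exact this
  haveI := hFne
  set u : Ultrafilter L := Ultrafilter.of F with hudef
  have hu : (u : Filter L) ≤ F := Ultrafilter.of_le F
  have hun : (u : Filter L) ≤ 𝓝 x₀ := hu.trans (le_trans inf_le_left inf_le_left)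
  have hXu : X ∈ u := by
    have h1 : F ≤ Filter.principal X := le_trans inf_le_left inf_le_right
    exact hu (h1 (Filter.mem_principal_self X))
  have hcc : ∀ C : Set L, IsCompact C → Cᶜ ∈ u := by
    intro C hC
    have h1 : F ≤ Filter.cocompact L := inf_le_right
    exact hu (h1 hC.compl_mem_cocompact)
  -- Claim 1: for any y ∈ X and τ ∈ (0,1], u-almost every y' satisfies
  -- (1-τ)•y + τ•y' ∈ F' y'
  have claim1 : ∀ y : L, ∀ (hy : y ∈ X), ∀ τ : ℝ, 0 < τ → τ ≤ 1 →
      {w : L | ∃ hw : w ∈ X, (1 - τ) • y + τ • w ∈ F' ⟨w, hw⟩} ∈ u := by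
    intro y hy τ hτ0 hτ1
    set C : Set L := (fun w : L => τ⁻¹ • (w - (1 - τ) • y)) '' (F' ⟨y, hy⟩) with hCdef
    have hCcpt : IsCompact C :=
      (hF'cpt ⟨y, hy⟩).image (((continuous_id.sub continuous_const).const_smul τ⁻¹))
    have hsub : X ∩ Cᶜ ⊆ {w : L | ∃ hw : w ∈ X, (1 - τ) • y + τ • w ∈ F' ⟨w, hw⟩} := by
      rintro w ⟨hwX, hwC⟩
      have hpseg : (1 - τ) • y + τ • w ∈ segment ℝ y w :=
        ⟨1 - τ, τ, by linarith, le_of_lt hτ0, by ring, rfl⟩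
      have := hseg ⟨y, hy⟩ ⟨w, hwX⟩ hpseg
      rw [Set.image_union] at this
      rcases this with hl | hr
      · exfalso
        apply hwC
        refine ⟨(1 - τ) • y + τ • w, hl, ?_⟩
        dsimp only
        rw [add_sub_cancel_left, smul_smul, inv_mul_cancel₀ (ne_of_gt hτ0), one_smul]
      · exact ⟨hwX, hr⟩
    exact Filter.mem_of_superset (Filter.inter_mem hXu (hcc C hCcpt)) hsub
  -- Claim 2 (usc): for every open U ⊇ F' x₀c, u-almost every y' has F' y' ⊆ U
  have claim2 : ∀ U : Set L, IsOpen U → F' x₀c ⊆ U →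
      {w : L | ∃ hw : w ∈ X, F' ⟨w, hw⟩ ⊆ U} ∈ u := by
    intro U hU hU0
    have hopen := husc (Subtype.val ⁻¹' U) (hU.preimage continuous_subtype_val)
    rcases isOpen_induced_iff.mp hopen with ⟨W, hWo, hWeq⟩
    have hx₀W : x₀ ∈ W := by
      have : x₀c ∈ {x : X | (Φ x : Set X) ⊆ Subtype.val ⁻¹' U} :=
        Set.image_subset_iff.mp hU0
      rw [← hWeq] at this
      exact this
    have hWu : W ∈ u := hun (hWo.mem_nhds hx₀W)
    refine Filter.mem_of_superset (Filter.inter_mem hXu hWu) ?_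
    rintro w ⟨hwX, hwW⟩
    refine ⟨hwX, Set.image_subset_iff.mpr ?_⟩
    have : (⟨w, hwX⟩ : X) ∈ Subtype.val ⁻¹' W := hwW
    rw [hWeq] at this
    exact this
  -- Claim 3: every y ∈ X belongs to F' x₀c
  have claim3 : ∀ y ∈ X, y ∈ F' x₀c := by
    intro y hy
    by_contra hyn
    -- separate y from the compact set F' x₀c
    obtain ⟨O, U, hOo, hUo, hyO, hCU, hOU⟩ :=
      SeparatedNhds.of_isCompact_isCompact (isCompact_singleton (x := y)) (hF'cpt x₀c)
        (disjoint_singleton_left.mpr hyn)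
    have hyO' : y ∈ O := hyO rfl
    -- continuity of (τ, w) ↦ y + τ • (w - y) at (0, x₀)
    have hg : Continuous fun q : ℝ × L => y + q.1 • (q.2 - y) :=
      continuous_const.add (continuous_fst.smul (continuous_snd.sub continuous_const))
    have hgO : (fun q : ℝ × L => y + q.1 • (q.2 - y)) ⁻¹' O ∈ 𝓝 ((0 : ℝ), x₀) := by
      refine hg.continuousAt.preimage_mem_nhds ?_
      have : y + (0 : ℝ) • (x₀ - y) = y := by simp
      rw [this]
      exact hOo.mem_nhds hyO'
    rw [nhds_prod_eq] at hgO
    rcases Filter.mem_prod_iff.mp hgO with ⟨A, hA, B, hB, hAB⟩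
    rcases Metric.mem_nhds_iff.mp hA with ⟨ε, hε, hball⟩
    set τ : ℝ := min (ε / 2) 1 with hτdef
    have hτ0 : 0 < τ := lt_min (by linarith) one_pos
    have hτ1 : τ ≤ 1 := min_le_right _ _
    have hτA : τ ∈ A := by
      apply hball
      rw [Metric.mem_ball, Real.dist_eq, sub_zero, abs_of_pos hτ0]
      exact lt_of_le_of_lt (min_le_left _ _) (by linarith)
    have hBu : B ∈ u := hun hB
    have hmem : ({w : L | ∃ hw : w ∈ X, (1 - τ) • y + τ • w ∈ F' ⟨w, hw⟩} ∩
        {w : L | ∃ hw : w ∈ X, F' ⟨w, hw⟩ ⊆ U}) ∩ B ∈ u :=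
      Filter.inter_mem (Filter.inter_mem (claim1 y hy τ hτ0 hτ1) (claim2 U hUo hCU)) hBu
    obtain ⟨y', ⟨⟨hy'X, hy'p⟩, ⟨hy'X2, hy'U⟩⟩, hy'B⟩ := u.nonempty_of_mem hmem
    -- the point p lies in O ∩ U, contradicting disjointness
    have hpO : y + τ • (y' - y) ∈ O := by
      have : (τ, y') ∈ A ×ˢ B := ⟨hτA, hy'B⟩
      exact hAB this
    have heq : y + τ • (y' - y) = (1 - τ) • y + τ • y' := by
      rw [smul_sub, sub_smul, one_smul]; abel
    have hpU : y + τ • (y' - y) ∈ U := by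
      rw [heq]
      exact hy'U hy'p
    exact (Set.disjoint_left.mp hOU hpO) hpU
  -- contradiction: X ⊆ F' x₀c is compact
  exact h univ isOpen_univ (mem_univ x₀) (F' x₀c) (hF'cpt x₀c)
    (fun w hw => claim3 w hw.2)

/-- Midpoint step: if the midpoint of `x₀` and `z` has a compact-trace neighborhood,
so does `z`. -/
lemma aux_midpoint {L : Type*} [TopologicalSpace L] [AddCommGroup L] [Module ℝ L]
    [IsTopologicalAddGroup L] [ContinuousSMul ℝ L]
    (X : Set L) (hconv : Convex ℝ X) (x₀ : L) (hx₀ : x₀ ∈ X) (z : L)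
    (hm : ∃ V : Set L, IsOpen V ∧ (1 / 2 : ℝ) • (x₀ + z) ∈ V ∧
      ∃ K : Set L, IsCompact K ∧ V ∩ X ⊆ K) :
    ∃ V : Set L, IsOpen V ∧ z ∈ V ∧ ∃ K : Set L, IsCompact K ∧ V ∩ X ⊆ K := by
  obtain ⟨V, hVo, hmV, K, hK, hVK⟩ := hm
  refine ⟨(fun w : L => (1 / 2 : ℝ) • (x₀ + w)) ⁻¹' V,
    hVo.preimage ((continuous_const.add continuous_id).const_smul _), hmV,
    (fun w : L => (2 : ℝ) • w - x₀) '' K,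
    hK.image ((continuous_id.const_smul (2 : ℝ)).sub continuous_const), ?_⟩
  rintro w ⟨hwV, hwX⟩
  have hmX : (1 / 2 : ℝ) • (x₀ + w) ∈ X := by
    have := hconv hx₀ hwX (by norm_num : (0:ℝ) ≤ 1/2) (by norm_num : (0:ℝ) ≤ 1/2)
      (by norm_num)
    rwa [smul_add]
  refine ⟨(1 / 2 : ℝ) • (x₀ + w), hVK ⟨hwV, hmX⟩, ?_⟩
  dsimp only
  module

/-- The closure of a nonempty upper compactly convex subset of a Hausdorff topological
vector space is locally compact. -/
theorem closure_upperCompactlyConvex_locallyCompact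
    {L : Type*} [TopologicalSpace L] [AddCommGroup L] [Module ℝ L]
    [IsTopologicalAddGroup L] [ContinuousSMul ℝ L] [T2Space L]
    (X : Set L) (hne : X.Nonempty) (hconv : Convex ℝ X)
    (hX : IsUpperCompactlyConvex X) :
    LocallyCompactSpace (closure X) := by
  obtain ⟨Φ, husc, hseg⟩ := hX
  obtain ⟨x₀, hx₀⟩ := hne
  -- every point of the closure has an open neighborhood with compact trace on X
  have key : ∀ z ∈ closure X, ∃ V : Set L, IsOpen V ∧ z ∈ V ∧
      ∃ K : Set L, IsCompact K ∧ V ∩ X ⊆ K := by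
    intro z hz
    by_contra hzn
    -- the sequence contracting `z` towards `x₀`
    set w : ℕ → L := fun n => x₀ + ((1 / 2 : ℝ) ^ n) • (z - x₀) with hwdef
    have hwP : ∀ n, ¬ ∃ V : Set L, IsOpen V ∧ w n ∈ V ∧
        ∃ K : Set L, IsCompact K ∧ V ∩ X ⊆ K := by
      intro n
      induction n with
      | zero =>
        simpa [hwdef] using hzn
      | succ n ih =>
        intro hP
        apply ih
        have heq : (1 / 2 : ℝ) • (x₀ + w n) = w (n + 1) := by
          simp only [hwdef]
          rw [pow_succ]
          module
        exact aux_midpoint X hconv x₀ hx₀ (w n) (by rw [heq]; exact hP)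
    -- but w n → x₀, which has such a neighborhood
    obtain ⟨V, hVo, hx₀V, K, hK, hVK⟩ := aux_compact_nbhd X Φ husc hseg x₀ hx₀
    have htend : Filter.Tendsto w Filter.atTop (𝓝 x₀) := by
      have h1 : Filter.Tendsto (fun n : ℕ => ((1 / 2 : ℝ) ^ n) • (z - x₀))
          Filter.atTop (𝓝 ((0 : ℝ) • (z - x₀))) :=
        (tendsto_pow_atTop_nhds_zero_of_lt_one (by norm_num) (by norm_num)).smul_const _
      rw [zero_smul] at h1
      have := Filter.Tendsto.const_add x₀ h1
      rwa [add_zero] at this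
    obtain ⟨n, hn⟩ := (htend.eventually (hVo.mem_nhds hx₀V)).exists
    exact hwP n ⟨V, hVo, hn, K, hK, hVK⟩
  -- assemble local compactness of the closure
  haveI : WeaklyLocallyCompactSpace (closure X) := by
    constructor
    rintro ⟨z, hz⟩
    obtain ⟨V, hVo, hzV, K, hK, hVK⟩ := key z hz
    have hVcl : V ∩ closure X ⊆ K := by
      intro p hp
      have : p ∈ closure (V ∩ X) := hVo.inter_closure hp
      have : p ∈ closure K := closure_mono hVK this
      rwa [hK.isClosed.closure_eq] at this
    refine ⟨Subtype.val ⁻¹' K, ?_, ?_⟩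
    · rw [Topology.IsEmbedding.subtypeVal.isCompact_iff]
      have himg : Subtype.val '' (Subtype.val ⁻¹' K : Set (closure X)) = K ∩ closure X := by
        rw [Set.image_preimage_eq_inter_range, Subtype.range_coe]
      rw [himg]
      exact hK.inter_right isClosed_closure
    · refine Filter.mem_of_superset
        (((hVo.preimage continuous_subtype_val).mem_nhds hzV) :
          (Subtype.val ⁻¹' V : Set (closure X)) ∈ 𝓝 ⟨z, hz⟩) ?_
      intro p hp
      exact hVcl ⟨hp, p.2⟩
  infer_instance
end

section
/- Let X be a nonempty convex subset of a Hausdorff real topological vector space L that is closed in L. Then the following conditions are equivalent: (1) X is compactly convex; (2) X is upper compactly convex; (3) X is locally compact. -/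
open TopologicalSpace Set

section Proofs

open Filter Topology

theorem cc_implies_ucc {L : Type*} [TopologicalSpace L] [AddCommGroup L] [Module ℝ L]
    (X : Set L) : IsCompactlyConvex X → IsUpperCompactlyConvex X := by
  rintro ⟨Φ, hcont, hseg⟩
  refine ⟨Φ, fun U hU => ?_, hseg⟩
  have : @IsOpen _ (vietorisTopology X) {K : NonemptyCompacts X | (K : Set X) ⊆ U} := by
    apply TopologicalSpace.isOpen_generateFrom_of_mem
    exact Or.inl ⟨U, hU, rfl⟩
  exact @Continuous.isOpen_preimage _ _ _ (vietorisTopology X) Φ hcont _ this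

theorem ucc_implies_lc {L : Type*} [TopologicalSpace L] [AddCommGroup L] [Module ℝ L]
    [IsTopologicalAddGroup L] [ContinuousSMul ℝ L] [T2Space L]
    (X : Set L) (hcl : IsClosed X) :
    IsUpperCompactlyConvex X → LocallyCompactSpace X := by
  rintro ⟨Φ, husc, hseg⟩
  set ΦL : X → Set L := fun x => Subtype.val '' (Φ x : Set X) with hΦL
  have hΦLcpt : ∀ x, IsCompact (ΦL x) := fun x =>
    (Φ x).isCompact.image continuous_subtype_val
  have hΦLX : ∀ x, ΦL x ⊆ X := by
    rintro x _ ⟨u, _, rfl⟩; exact u.2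
  have hmem : ∀ x : X, (x : L) ∈ ΦL x := by
    intro x
    have h := hseg x x
    rw [segment_same] at h
    have := h (mem_singleton _)
    rwa [union_self] at this
  suffices h : WeaklyLocallyCompactSpace X by infer_instance
  constructor
  intro x₀
  set C : Set L := ΦL x₀ with hCdef
  have hC : IsCompact C := hΦLcpt x₀
  have hx₀C : (x₀ : L) ∈ C := hmem x₀
  set D : Set L := (fun p : L × L => p.1 - p.2) '' (C ×ˢ C) with hDdef
  have hD : IsCompact D := (hC.prod hC).image (by fun_prop)
  by_cases hP : ∃ V ∈ 𝓝 (0 : L), ∃ a ∈ X, ¬ ∃ d ∈ D, ∃ v ∈ V, a - (x₀ : L) = d + v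
  · obtain ⟨V₀, hV₀, a, haX, ha⟩ := hP
    -- shrink to an open symmetric V with triple sums in V₀
    obtain ⟨V₁, hV₁, hV₁add⟩ := exists_nhds_zero_half hV₀
    obtain ⟨V₂, hV₂, hV₂add⟩ := exists_nhds_zero_half (inter_mem hV₁ hV₁)
    have hV₂' : V₂ ∩ V₁ ∈ 𝓝 (0 : L) := inter_mem hV₂ hV₁
    set V : Set L := interior (V₂ ∩ V₁) ∩ (fun z : L => -z) ⁻¹' interior (V₂ ∩ V₁) with hVdef
    have hVopen : IsOpen V := (isOpen_interior).inter (isOpen_interior.preimage continuous_neg)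
    have hV0 : (0 : L) ∈ V := by
      constructor
      · exact mem_interior_iff_mem_nhds.2 hV₂'
      · simp only [mem_preimage, neg_zero]
        exact mem_interior_iff_mem_nhds.2 hV₂'
    have hVsub : V ⊆ V₂ ∩ V₁ := fun z hz => interior_subset hz.1
    have hVsymm : ∀ z ∈ V, -z ∈ V := by
      rintro z ⟨h1, h2⟩
      exact ⟨h2, by simpa using h1⟩
    have htriple : ∀ w₁ ∈ V, ∀ w₂ ∈ V, ∀ w₃ ∈ V, w₁ + w₂ + w₃ ∈ V₀ := by
      intro w₁ h₁ w₂ h₂ w₃ h₃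
      have h12 : w₁ + w₂ ∈ V₁ ∩ V₁ :=
        hV₂add _ (hVsub h₁).1 _ (hVsub h₂).1
      exact hV₁add _ h12.1 _ (hVsub h₃).2
    -- the open set U around C
    set U : Set L := ⋃ c ∈ C, {z : L | z - c ∈ V} with hUdef
    have hUopen : IsOpen U := by
      refine isOpen_biUnion fun c _ => ?_
      exact hVopen.preimage (by fun_prop)
    have hCU : C ⊆ U := by
      intro c hc
      exact mem_biUnion hc (by simpa using hV0)
    have hUdiff : ∀ p₁ ∈ U, ∀ p₂ ∈ U, ∃ d ∈ D, ∃ w₁ ∈ V, ∃ w₂ ∈ V, p₂ - p₁ = d + w₁ + w₂ := by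
      intro p₁ h₁ p₂ h₂
      obtain ⟨c₁, hc₁, hp₁⟩ := mem_iUnion₂.mp h₁
      obtain ⟨c₂, hc₂, hp₂⟩ := mem_iUnion₂.mp h₂
      refine ⟨c₂ - c₁, ⟨⟨c₂, c₁⟩, ⟨hc₂, hc₁⟩, rfl⟩, p₂ - c₂, hp₂, -(p₁ - c₁), hVsymm _ hp₁, by abel⟩
    -- choose t
    set b : L := a - (x₀ : L) with hbdef
    have hbt : ∃ t : ℝ, 0 < t ∧ t < 1 ∧
        ¬ ∃ d ∈ D, ∃ w₁ ∈ V, ∃ w₂ ∈ V, (1 - t) • b = d + w₁ + w₂ := by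
      by_contra hcon
      push_neg at hcon
      have htend : Filter.Tendsto (fun t : ℝ => t • b) (𝓝 0) (𝓝 (0 : L)) := by
        have : Continuous fun t : ℝ => t • b := by fun_prop
        simpa using this.tendsto 0
      have hev : ∀ᶠ t : ℝ in 𝓝 0, t • b ∈ V :=
        htend (hVopen.mem_nhds hV0)
      obtain ⟨t, htV, ht0, ht1⟩ : ∃ t : ℝ, t • b ∈ V ∧ 0 < t ∧ t < 1 := by
        have h2 : ∀ᶠ t : ℝ in 𝓝[>] (0:ℝ), t • b ∈ V := nhdsWithin_le_nhds hev
        have h3 : ∀ᶠ t : ℝ in 𝓝[>] (0:ℝ), t < 1 := by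
          filter_upwards [Ioo_mem_nhdsGT_of_mem (by norm_num : (0:ℝ) ∈ Ico (0:ℝ) 1)] with t ht
          exact ht.2
        have h4 : ∀ᶠ t : ℝ in 𝓝[>] (0:ℝ), 0 < t := eventually_mem_nhdsWithin.mono fun t ht => ht
        obtain ⟨t, h₁, h₂, h₃⟩ := (h2.and (h3.and h4)).exists
        exact ⟨t, h₁, h₃, h₂⟩
      obtain ⟨d, hd, w₁, hw₁, w₂, hw₂, heq⟩ := hcon t ht0 ht1
      apply ha
      refine ⟨d, hd, w₁ + w₂ + t • b, htriple _ hw₁ _ hw₂ _ htV, ?_⟩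
      have h5 : b - t • b = d + w₁ + w₂ := by
        rw [← heq, sub_smul, one_smul]
      exact (sub_eq_iff_eq_add.mp h5).trans (by abel)
    obtain ⟨t, ht0, ht1, htbad⟩ := hbt
    -- the open preimage in X and a closed neighborhood inside the usc set
    set UX : Set X := Subtype.val ⁻¹' U with hUXdef
    have hUXopen : IsOpen UX := hUopen.preimage continuous_subtype_val
    have hWopen : IsOpen {x : X | (Φ x : Set X) ⊆ UX} := husc UX hUXopen
    have hx₀W : x₀ ∈ {x : X | (Φ x : Set X) ⊆ UX} := by
      intro u hu
      exact hCU ⟨u, hu, rfl⟩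
    obtain ⟨N, hNnhds, hNclosed, hNsub⟩ :=
      exists_mem_nhds_isClosed_subset (hWopen.mem_nhds hx₀W)
    set M : Set L := Subtype.val '' N with hMdef
    have hMclosed : IsClosed M := hcl.isClosedEmbedding_subtypeVal.isClosedMap N hNclosed
    have hMX : M ⊆ X := by rintro _ ⟨u, _, rfl⟩; exact u.2
    have hMΦ : ∀ z ∈ M, ∀ (hz : z ∈ X), ΦL ⟨z, hz⟩ ⊆ U := by
      rintro _ ⟨u, huN, rfl⟩ hz
      have hu : (Φ u : Set X) ⊆ UX := hNsub huN
      rintro _ ⟨v, hv, rfl⟩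
      have : (⟨(u : L), hz⟩ : X) = u := Subtype.ext rfl
      rw [this] at hv
      exact hu hv
    -- M is compact
    have hMcpt : IsCompact M := by
      rw [isCompact_iff_ultrafilter_le_nhds]
      intro f hf
      have hMf : M ∈ f := le_principal_iff.mp hf
      by_contra hdiv
      push_neg at hdiv
      -- no limit at all
      have hnolim : ∀ x : L, ¬ (↑f ≤ 𝓝 x) := by
        intro x hx
        have hxM : x ∈ M := by
          have hne : (𝓝 x ⊓ 𝓟 M).NeBot := neBot_of_le (le_inf hx hf)
          have hcp : ClusterPt x (𝓟 M) := hne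
          rwa [← mem_closure_iff_clusterPt, hMclosed.closure_eq] at hcp
        exact hdiv x hxM hx
      -- key claim
      have hkey : ∀ y : X, {z ∈ M | (1 - t) • (y : L) + t • z ∈ ΦL y} ∉ f := by
        intro y hBf
        set h : L ≃ₜ L :=
          (Homeomorph.smulOfNeZero (t : ℝ) ht0.ne').trans
            (Homeomorph.addLeft ((1 - t) • (y : L))) with hhdef
        have hmap : ΦL y ∈ Filter.map h f := by
          rw [Filter.mem_map]
          refine Filter.mem_of_superset hBf ?_
          rintro z ⟨_, hz⟩
          simpa [hhdef, Homeomorph.trans_apply] using hz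
        obtain ⟨w, _, hw⟩ := isCompact_iff_ultrafilter_le_nhds.mp (hΦLcpt y)
          (f.map h) (le_principal_iff.mpr hmap)
        have : ↑f ≤ 𝓝 (h.symm w) := by
          rw [← h.comap_nhds_eq]
          exact Filter.map_le_iff_le_comap.mp hw
        exact hnolim _ this
      -- intersect for the two base points
      have h1 := hkey x₀
      have h2 := hkey ⟨a, haX⟩
      have hc1 : {z ∈ M | (1 - t) • (x₀ : L) + t • z ∈ ΦL x₀}ᶜ ∈ f :=
        Ultrafilter.compl_mem_iff_notMem.2 h1
      have hc2 : {z ∈ M | (1 - t) • a + t • z ∈ ΦL ⟨a, haX⟩}ᶜ ∈ f :=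
        Ultrafilter.compl_mem_iff_notMem.2 h2
      obtain ⟨z, hzM, hz1, hz2⟩ :=
        Ultrafilter.nonempty_of_mem (inter_mem hMf (inter_mem hc1 hc2))
      have hzX : z ∈ X := hMX hzM
      -- segment property at z
      have hsegpt : ∀ y : X, (1 - t) • (y : L) + t • z ∈ ΦL y ∪ ΦL ⟨z, hzX⟩ := by
        intro y
        have hs : (1 - t) • (y : L) + t • z ∈ segment ℝ (y : L) ((⟨z, hzX⟩ : X) : L) := by
          exact ⟨1 - t, t, by linarith, le_of_lt ht0, by ring, rfl⟩
        have := hseg y ⟨z, hzX⟩ hs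
        rw [image_union] at this
        exact this
      have hp₁ : (1 - t) • (x₀ : L) + t • z ∈ U := by
        rcases hsegpt x₀ with h | h
        · exact absurd ⟨hzM, h⟩ hz1
        · exact hMΦ z hzM hzX h
      have hp₂ : (1 - t) • a + t • z ∈ U := by
        rcases hsegpt ⟨a, haX⟩ with h | h
        · exact absurd ⟨hzM, h⟩ hz2
        · exact hMΦ z hzM hzX h
      obtain ⟨d, hd, w₁, hw₁, w₂, hw₂, heq⟩ := hUdiff _ hp₁ _ hp₂
      apply htbad
      refine ⟨d, hd, w₁, hw₁, w₂, hw₂, ?_⟩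
      rw [← heq, hbdef, smul_sub]
      abel
    -- transfer compactness to the subtype
    refine ⟨N, ?_, hNnhds⟩
    rw [Subtype.isCompact_iff]
    exact hMcpt
  · -- X is compact
    push_neg at hP
    have hXsub : X ⊆ (fun z : L => (x₀ : L) + z) '' D := by
      intro x hx
      have hcl' : x - (x₀ : L) ∈ closure D := by
        rw [mem_closure_iff_nhds]
        intro N hN
        obtain ⟨W, hW, hWsub⟩ := by
          rw [← nhds_translation_sub (x - (x₀ : L))] at hN
          exact hN
        have hW' : (fun z : L => -z) ⁻¹' W ∈ 𝓝 (0 : L) := by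
          exact (continuous_neg.tendsto (0 : L)) (by simpa using hW)
        obtain ⟨d, hd, v, hv, hdv⟩ := hP _ hW' x hx
        refine ⟨d, ?_, hd⟩
        apply hWsub
        have hveq : d - (x - (x₀ : L)) = -v := by
          rw [hdv]; abel
        simpa [hveq] using hv
      rw [(hD.isClosed).closure_eq] at hcl'
      exact ⟨x - (x₀ : L), hcl', by change (x₀ : L) + (x - (x₀ : L)) = x; abel⟩
    have hXcpt : IsCompact X :=
      (hD.image (by fun_prop)).of_isClosed_subset hcl hXsub
    haveI : CompactSpace X := isCompact_iff_compactSpace.mp hXcpt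
    exact ⟨univ, isCompact_univ, Filter.univ_mem⟩

variable {L : Type*} [TopologicalSpace L] [AddCommGroup L] [Module ℝ L]
    [IsTopologicalAddGroup L] [ContinuousSMul ℝ L] [T2Space L]

theorem sigma_cpt (X : Set L) (hne : X.Nonempty) (hconv : Convex ℝ X)
    (hcl : IsClosed X) [LocallyCompactSpace X] : SigmaCompactSpace X := by
  classical
  obtain ⟨p₀, hp₀⟩ := hne
  set p : X := ⟨p₀, hp₀⟩ with hpdef
  set I : Set ℝ := Icc (0:ℝ) 1 with hIdef
  -- the ray map
  have hmem : ∀ (s : I) (x : X), (p₀ + s.1 • ((x : L) - p₀)) ∈ X := by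
    rintro ⟨s, hs0, hs1⟩ x
    have h := hconv hp₀ x.2 (a := 1 - s) (b := s) (by linarith) hs0 (by ring)
    have : (1 - s) • p₀ + s • (x : L) = p₀ + s • ((x : L) - p₀) := by
      rw [sub_smul, one_smul, smul_sub]; abel
    rwa [this] at h
  set ρ : I × X → X := fun q => ⟨p₀ + q.1.1 • ((q.2 : L) - p₀), hmem q.1 q.2⟩ with hρdef
  have hρcont : Continuous ρ := by
    apply Continuous.subtype_mk
    fun_prop
  have hρ_zero : ∀ (s : I) (x : X), s.1 = 0 → ρ (s, x) = p := by
    rintro s x h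
    apply Subtype.ext
    simp [hρdef, h, hpdef]
  have hρ_one : ∀ (s : I) (x : X), s.1 = 1 → ρ (s, x) = x := by
    rintro s x h
    apply Subtype.ext
    simp [hρdef, h]
  have hρ_p : ∀ (s : I), ρ (s, p) = p := by
    intro s; apply Subtype.ext; simp [hρdef, hpdef]
  -- compact neighborhood and open star neighborhood
  obtain ⟨K₀, hK₀cpt, hK₀nhds⟩ := exists_compact_mem_nhds p
  set UM : Set X := interior K₀ with hUMdef
  have hpUM : p ∈ UM := mem_interior_iff_mem_nhds.2 hK₀nhds
  set S : Set X := {x : X | ∀ s : I, ρ (s, x) ∈ UM} with hSdef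
  have hSopen : IsOpen S := by
    rw [isOpen_iff_mem_nhds]
    intro x hx
    have hsub : (univ : Set I) ×ˢ ({x} : Set X) ⊆ ρ ⁻¹' UM := by
      rintro ⟨s, y⟩ ⟨-, hy⟩
      rcases hy with rfl
      exact hx s
    obtain ⟨u, v, hu, hv, huu, hvv, huv⟩ :=
      generalized_tube_lemma isCompact_univ isCompact_singleton
        (isOpen_interior.preimage hρcont) hsub
    refine Filter.mem_of_superset (hv.mem_nhds (hvv rfl)) ?_
    intro y hy s
    exact huv ⟨huu (mem_univ s), hy⟩
  have hpS : p ∈ S := fun s => by rw [hρ_p]; exact hpUM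
  have hSK₀ : S ⊆ K₀ := by
    intro x hx
    have := hx ⟨1, by norm_num, le_refl 1⟩
    rw [hρ_one _ _ rfl] at this
    exact interior_subset this
  have hclScpt : IsCompact (closure S) :=
    hK₀cpt.of_isClosed_subset isClosed_closure
      ((closure_mono hSK₀).trans (hK₀cpt.isClosed.closure_subset))
  -- closure S is star-shaped
  have hstar : ∀ (s : I), MapsTo (fun x => ρ (s, x)) (closure S) (closure S) := by
    intro s
    have hmapsS : MapsTo (fun x => ρ (s, x)) S S := by
      intro x hx a
      have : ρ (a, ρ (s, x)) = ρ (⟨a.1 * s.1, ⟨mul_nonneg a.2.1 s.2.1,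
          mul_le_one₀ a.2.2 s.2.1 s.2.2⟩⟩, x) := by
        apply Subtype.ext
        simp only [hρdef]
        rw [add_sub_cancel_left, smul_smul]
      rw [this]
      exact hx _
    exact hmapsS.closure (hρcont.comp (by fun_prop))
  -- the compact absorbing sets
  have hmemI : ∀ n : ℕ, (1:ℝ) / (n + 2) ∈ Icc (0:ℝ) 1 := by
    intro n
    constructor
    · positivity
    · rw [div_le_one (by positivity)]
      linarith [Nat.cast_nonneg (α := ℝ) n]
  set E : ℕ → Set X := fun n =>
    {x : X | ρ (⟨1 / (n + 2), hmemI n⟩, x) ∈ closure S} with hEdef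
  have hEclosed : ∀ n, IsClosed (E n) := by
    intro n
    exact isClosed_closure.preimage (hρcont.comp (by fun_prop))
  have hEcpt : ∀ n, IsCompact (E n) := by
    intro n
    rw [Subtype.isCompact_iff]
    set ψ : L → L := fun z => p₀ + ((n : ℝ) + 2) • (z - p₀) with hψdef
    have hψcont : Continuous ψ := by fun_prop
    have himg : Subtype.val '' E n ⊆ ψ '' (Subtype.val '' closure S) := by
      rintro _ ⟨x, hx, rfl⟩
      refine ⟨_, ⟨_, hx, rfl⟩, ?_⟩
      simp only [hψdef, hρdef]
      rw [add_sub_cancel_left, smul_smul]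
      rw [mul_one_div, div_self (by positivity), one_smul]
      abel
    have hcl' : IsClosed (Subtype.val '' E n) :=
      hcl.isClosedEmbedding_subtypeVal.isClosedMap _ (hEclosed n)
    exact IsCompact.of_isClosed_subset
      (((hclScpt.image continuous_subtype_val)).image hψcont) hcl' himg
  have hEcover : ∀ x : X, ∃ n, x ∈ E n := by
    intro x
    have htend : Tendsto (fun n : ℕ => (1 : ℝ) / (n + 2)) atTop (𝓝 0) := by
      have := tendsto_one_div_add_atTop_nhds_zero_nat (𝕜 := ℝ)
      have h2 : Tendsto (fun n : ℕ => n + 1) atTop atTop := tendsto_add_atTop_nat 1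
      have := this.comp h2
      convert this using 2 with n
      simp; ring_nf
    have htendI : Tendsto (fun n : ℕ => (⟨1 / (n + 2), hmemI n⟩ : I))
        atTop (𝓝 (⟨0, by norm_num, by norm_num⟩ : I)) := by
      rw [tendsto_subtype_rng]
      exact htend
    have hcontx : Continuous (fun s : I => ρ (s, x)) := hρcont.comp (by fun_prop)
    have htd : Tendsto (fun n : ℕ => ρ (⟨1 / (n + 2), hmemI n⟩, x)) atTop
        (𝓝 (ρ (⟨0, by norm_num, by norm_num⟩, x))) :=
      (hcontx.tendsto _).comp htendI
    rw [hρ_zero _ _ rfl] at htd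
    have hev := htd.eventually_mem (hSopen.mem_nhds hpS)
    rw [Filter.eventually_atTop] at hev
    obtain ⟨n, hn⟩ := hev
    exact ⟨n, subset_closure (hn n le_rfl)⟩
  refine ⟨⟨E, hEcpt, ?_⟩⟩
  rw [iUnion_eq_univ_iff]
  exact fun x => hEcover x

theorem exists_proper_function (Y : Type*) [TopologicalSpace Y] [T2Space Y]
    [LocallyCompactSpace Y] [SigmaCompactSpace Y] :
    ∃ f : Y → ℝ, Continuous f ∧ (∀ y, 0 ≤ f y) ∧ ∀ c : ℝ, IsCompact {y | f y ≤ c} := by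
  classical
  set K := CompactExhaustion.choice Y with hKdef
  have hmono : ∀ {m n : ℕ}, m ≤ n → K m ⊆ K n := by
    intro m n h
    exact K.subset h
  have hU : ∀ n : ℕ, ∃ u : C(Y, ℝ), EqOn u 0 (K n) ∧ EqOn u 1 (interior (K (n+1)))ᶜ ∧
      ∀ y, u y ∈ Icc (0:ℝ) 1 := by
    intro n
    refine exists_continuous_zero_one_of_isCompact (K.isCompact n)
      (isOpen_interior.isClosed_compl) ?_
    rw [disjoint_compl_right_iff_subset]
    exact K.subset_interior_succ n
  choose u hu0 hu1 hubd using hU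
  set f : Y → ℝ := fun y => ∑' n, u n y with hfdef
  have hvanish : ∀ y : Y, ∀ n, K.find y ≤ n → u n y = 0 := by
    intro y n hn
    exact hu0 n (hmono hn (K.mem_find y))
  have hsummable : ∀ y : Y, Summable (fun n => u n y) := by
    intro y
    apply summable_of_ne_finset_zero (s := Finset.range (K.find y))
    intro n hn
    rw [Finset.mem_range, not_lt] at hn
    exact hvanish y n hn
  have hnonneg : ∀ y, 0 ≤ f y := by
    intro y
    exact tsum_nonneg fun n => (hubd n y).1
  have hcont : Continuous f := by
    rw [continuous_iff_continuousAt]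
    intro y
    set m := K.find y with hmdef
    have hyint : y ∈ interior (K (m+1)) := K.subset_interior_succ m (K.mem_find y)
    have heq : ∀ z ∈ interior (K (m+1)), f z = ∑ n ∈ Finset.range (m+1), u n z := by
      intro z hz
      apply tsum_eq_sum
      intro n hn
      rw [Finset.mem_range, not_lt] at hn
      exact hu0 n (hmono hn (interior_subset hz))
    have : f =ᶠ[𝓝 y] fun z => ∑ n ∈ Finset.range (m+1), u n z := by
      filter_upwards [isOpen_interior.mem_nhds hyint] with z hz
      exact heq z hz
    rw [ContinuousAt, this.eq_of_nhds]
    refine (Filter.Tendsto.congr' this.symm ?_)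
    have hc : Continuous (fun z => ∑ n ∈ Finset.range (m+1), u n z) := by
      apply continuous_finset_sum
      intro n _
      exact (u n).continuous
    exact hc.continuousAt
  have hproper : ∀ m : ℕ, ∀ y : Y, y ∉ K m → (m : ℝ) ≤ f y := by
    intro m y hy
    have hones : ∀ n < m, u n y = 1 := by
      intro n hn
      apply hu1 n
      intro hcon
      exact hy (hmono hn (interior_subset hcon))
    calc (m : ℝ) = ∑ n ∈ Finset.range m, 1 := by simp
    _ = ∑ n ∈ Finset.range m, u n y := by
        apply Finset.sum_congr rfl
        intro n hn
        rw [hones n (Finset.mem_range.mp hn)]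
    _ ≤ f y := Summable.sum_le_tsum _ (fun n _ => (hubd n y).1) (hsummable y)
  refine ⟨f, hcont, hnonneg, ?_⟩
  intro c
  obtain ⟨m, hm⟩ := exists_nat_gt c
  have hsub : {y | f y ≤ c} ⊆ K m := by
    intro y hy
    by_contra hyK
    have := hproper m y hyK
    have : (m:ℝ) ≤ c := le_trans this hy
    linarith
  exact (K.isCompact m).of_isClosed_subset (isClosed_le hcont continuous_const) hsub

theorem lc_implies_cc_core (X : Set L) (hne : X.Nonempty) (hconv : Convex ℝ X)
    (hcl : IsClosed X) [LocallyCompactSpace X] [SigmaCompactSpace X]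
    (f : X → ℝ) (hfcont : Continuous f) (hfnonneg : ∀ y, 0 ≤ f y)
    (hfproper : ∀ c : ℝ, IsCompact {y : X | f y ≤ c}) : IsCompactlyConvex X := by
  classical
  obtain ⟨p₀, hp₀⟩ := hne
  set p : X := ⟨p₀, hp₀⟩ with hpdef
  set I : Set ℝ := Icc (0:ℝ) 1 with hIdef
  have hmem : ∀ (s : I) (x : X), (p₀ + s.1 • ((x : L) - p₀)) ∈ X := by
    rintro ⟨s, hs0, hs1⟩ x
    have h := hconv hp₀ x.2 (a := 1 - s) (b := s) (by linarith) hs0 (by ring)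
    have heq : (1 - s) • p₀ + s • (x : L) = p₀ + s • ((x : L) - p₀) := by
      rw [sub_smul, one_smul, smul_sub]; abel
    rwa [heq] at h
  set ρ : I × X → X := fun q => ⟨p₀ + q.1.1 • ((q.2 : L) - p₀), hmem q.1 q.2⟩ with hρdef
  have hρcont : Continuous ρ := by
    apply Continuous.subtype_mk; fun_prop
  have hρ_zero : ∀ (s : I) (x : X), s.1 = 0 → ρ (s, x) = p := by
    rintro s x h; apply Subtype.ext; simp [hρdef, h, hpdef]
  have hρ_one : ∀ (s : I) (x : X), s.1 = 1 → ρ (s, x) = x := by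
    rintro s x h; apply Subtype.ext; simp [hρdef, h]
  have hIm : ∀ a s : I, a.1 * s.1 ∈ I := fun a s =>
    ⟨mul_nonneg a.2.1 s.2.1, mul_le_one₀ a.2.2 s.2.1 s.2.2⟩
  have hρ_comp : ∀ (a s : I) (x : X), ρ (a, ρ (s, x)) = ρ (⟨a.1 * s.1, hIm a s⟩, x) := by
    intro a s x
    apply Subtype.ext
    simp only [hρdef]
    rw [add_sub_cancel_left, smul_smul]
  -- the radial sup function v
  set F : I × X → ℝ := fun q => f (ρ q) with hFdef
  have hFcont : Continuous F := hfcont.comp hρcont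
  have hFcont1 : ∀ s : I, Continuous fun x => F (s, x) := by
    intro s; exact hFcont.comp (by fun_prop)
  have hrange_cpt : ∀ x : X, IsCompact (range fun s : I => F (s, x)) := by
    intro x
    exact isCompact_range (hFcont.comp (by fun_prop))
  have hrange_ne : ∀ x : X, (range fun s : I => F (s, x)).Nonempty := fun x =>
    range_nonempty _
  set v : X → ℝ := fun x => sSup (range fun s : I => F (s, x)) with hvdef
  have hFv : ∀ (s : I) (x : X), F (s, x) ≤ v x := by
    intro s x
    exact le_csSup (hrange_cpt x).bddAbove ⟨s, rfl⟩
  have hv_mem : ∀ x : X, ∃ s : I, F (s, x) = v x := by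
    intro x
    have := (hrange_cpt x).sSup_mem (hrange_ne x)
    obtain ⟨s, hs⟩ := this
    exact ⟨s, hs⟩
  have hfv : ∀ x, f x ≤ v x := by
    intro x
    have h := hFv ⟨1, by norm_num, le_refl 1⟩ x
    simp only [hFdef] at h
    rwa [hρ_one ⟨1, by norm_num, le_refl 1⟩ x rfl] at h
  have hv_nonneg : ∀ x, 0 ≤ v x := fun x => le_trans (hfnonneg x) (hfv x)
  have hρ_px : ∀ x : X, ρ (⟨0, by norm_num, by norm_num⟩, x) = p := fun x => hρ_zero _ _ rfl
  have hvp_le : ∀ x, f p ≤ v x := by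
    intro x
    have h := hFv ⟨0, by norm_num, by norm_num⟩ x
    simp only [hFdef] at h
    rwa [hρ_px] at h
  have hvp : v p = f p := by
    apply le_antisymm
    · apply csSup_le (hrange_ne p)
      rintro b ⟨s, rfl⟩
      simp only [hFdef]
      have : ρ (s, p) = p := by
        apply Subtype.ext; simp [hρdef, hpdef]
      rw [this]
    · exact hvp_le p
  -- continuity of v
  have hv_cont : Continuous v := by
    rw [continuous_iff_continuousAt]
    intro x₀
    rw [ContinuousAt, tendsto_order]
    constructor
    · intro b hb
      obtain ⟨s₀, hs₀⟩ := hv_mem x₀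
      have hopen : IsOpen {x : X | b < F (s₀, x)} :=
        isOpen_lt continuous_const (hFcont1 s₀)
      have hx₀mem : x₀ ∈ {x : X | b < F (s₀, x)} := by
        simp only [mem_setOf_eq, hs₀]; exact hb
      filter_upwards [hopen.mem_nhds hx₀mem] with x hx
      exact lt_of_lt_of_le hx (hFv s₀ x)
    · intro b hb
      set b' := (v x₀ + b) / 2 with hb'def
      have hb'1 : v x₀ < b' := by rw [hb'def]; linarith
      have hb'2 : b' < b := by rw [hb'def]; linarith
      have hsub : (univ : Set I) ×ˢ ({x₀} : Set X) ⊆ F ⁻¹' (Iio b') := by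
        rintro ⟨s, y⟩ ⟨-, hy⟩
        rcases hy with rfl
        exact lt_of_le_of_lt (hFv s _) hb'1
      obtain ⟨uu, vv, huu, hvv, huu2, hvv2, huv⟩ :=
        generalized_tube_lemma isCompact_univ isCompact_singleton
          (isOpen_Iio.preimage hFcont) hsub
      filter_upwards [hvv.mem_nhds (hvv2 rfl)] with x hx
      have hall : ∀ s : I, F (s, x) ≤ b' := by
        intro s
        exact le_of_lt (huv ⟨huu2 (mem_univ s), hx⟩)
      have : v x ≤ b' := csSup_le (hrange_ne x) (by rintro _ ⟨s, rfl⟩; exact hall s)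
      exact lt_of_le_of_lt this hb'2
  -- monotonicity along rays
  have hkey : ∀ (b s : I), b.1 ≤ s.1 → ∀ x : X, f (ρ (b, x)) ≤ v (ρ (s, x)) := by
    intro b s hbs x
    by_cases hs : s.1 = 0
    · have hb0 : b = ⟨0, by norm_num, by norm_num⟩ := by
        apply Subtype.ext
        have := b.2.1
        simp only []
        linarith [hbs, hs ▸ hbs]
      rw [hb0, hρ_px]
      exact le_trans (le_of_eq (congrArg f (hρ_px x).symm ▸ rfl)) (hvp_le _)
    · have hspos : 0 < s.1 := lt_of_le_of_ne s.2.1 (Ne.symm hs)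
      set c : I := ⟨b.1 / s.1, div_nonneg b.2.1 s.2.1, by
        rw [div_le_one hspos]; exact hbs⟩ with hcdef
      have hbc : (⟨c.1 * s.1, hIm c s⟩ : I) = b := by
        apply Subtype.ext
        show c.1 * s.1 = b.1
        exact div_mul_cancel₀ _ hs
      have hricky : ρ (c, ρ (s, x)) = ρ (b, x) := by
        rw [hρ_comp, hbc]
      have := hFv c (ρ (s, x))
      simp only [hFdef] at this
      rwa [hricky] at this
  have hvmono : ∀ (s' s : I), s'.1 ≤ s.1 → ∀ x : X, v (ρ (s', x)) ≤ v (ρ (s, x)) := by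
    intro s' s hss x
    apply csSup_le (hrange_ne _)
    rintro _ ⟨a, rfl⟩
    simp only [hFdef]
    rw [hρ_comp]
    apply hkey _ s _ x
    show a.1 * s'.1 ≤ s.1
    calc a.1 * s'.1 ≤ 1 * s'.1 := mul_le_mul_of_nonneg_right a.2.2 s'.2.1
    _ = s'.1 := one_mul _
    _ ≤ s.1 := hss
  have hone : (1:ℝ) ∈ I := ⟨by norm_num, le_refl 1⟩
  have hzero : (0:ℝ) ∈ I := ⟨le_refl 0, by norm_num⟩
  have hv_ρ_le : ∀ (s : I) (x : X), v (ρ (s, x)) ≤ v x := by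
    intro s x
    have := hvmono s ⟨1, hone⟩ s.2.2 x
    rwa [hρ_one ⟨1, hone⟩ x rfl] at this
  -- dense sequence in I
  obtain ⟨sq, hsq⟩ := TopologicalSpace.exists_dense_seq I
  -- the function φr
  set φr : ℝ → ℝ := fun t => t / (1 + t) with hφrdef
  have hφr_nonneg : ∀ a, 0 ≤ a → 0 ≤ φr a := by
    intro a ha; exact div_nonneg ha (by linarith)
  have hφr_le_one : ∀ a, 0 ≤ a → φr a ≤ 1 := by
    intro a ha
    rw [hφrdef]
    rw [div_le_one (by linarith)]
    linarith
  have hφr_strict : ∀ a b, 0 ≤ a → a < b → φr a < φr b := by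
    intro a b ha hab
    rw [hφrdef]
    rw [div_lt_div_iff₀ (by linarith) (by linarith)]
    ring_nf
    linarith
  have hφr_mono : ∀ a b, 0 ≤ a → a ≤ b → φr a ≤ φr b := by
    intro a b ha hab
    rcases eq_or_lt_of_le hab with rfl | h
    · exact le_refl _
    · exact le_of_lt (hφr_strict a b ha h)
  -- the strictifying series w
  set term : ℕ → X → ℝ := fun n x => φr (v (ρ (sq n, x))) / 2 ^ (n + 1) with htermdef
  have hterm_nonneg : ∀ n x, 0 ≤ term n x := by
    intro n x
    exact div_nonneg (hφr_nonneg _ (hv_nonneg _)) (by positivity)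
  have hterm_le : ∀ n x, term n x ≤ 1 / 2 ^ (n + 1) := by
    intro n x
    have h1 : φr (v (ρ (sq n, x))) ≤ 1 := hφr_le_one _ (hv_nonneg _)
    simp only [htermdef]
    gcongr
  have hgeom : Summable (fun n : ℕ => (1:ℝ) / 2 ^ (n + 1)) := by
    apply (summable_geometric_two.mul_left (1/2 : ℝ)).congr
    intro n
    rw [pow_succ]
    field_simp
    rw [← mul_pow]; norm_num
  have hconst_summable : ∀ κ : ℝ, Summable (fun n : ℕ => κ / 2 ^ (n + 1)) := by
    intro κ
    apply (hgeom.mul_left κ).congr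
    intro n
    field_simp
  have hsumW : ∀ x, Summable (fun n => term n x) := fun x =>
    Summable.of_nonneg_of_le (fun n => hterm_nonneg n x) (fun n => hterm_le n x) hgeom
  set w : X → ℝ := fun x => ∑' n, term n x with hwdef
  have hterm_cont : ∀ n, Continuous (term n) := by
    intro n
    apply Continuous.div_const
    have hvs : Continuous fun x => v (ρ (sq n, x)) := hv_cont.comp (hρcont.comp (by fun_prop))
    apply Continuous.div hvs (by fun_prop)
    intro x
    have := hv_nonneg (ρ (sq n, x))
    intro hcon
    linarith [hcon]
  have hw_cont : Continuous w := by
    apply continuous_tsum hterm_cont hgeom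
    intro n x
    rw [Real.norm_eq_abs, abs_of_nonneg (hterm_nonneg n x)]
    exact hterm_le n x
  set u : X → ℝ := fun x => v x + w x with hudef
  have hu_cont : Continuous u := hv_cont.add hw_cont
  have hw_nonneg : ∀ x, 0 ≤ w x := fun x => tsum_nonneg (fun n => hterm_nonneg n x)
  have hterm_mono_ray : ∀ (σ : I) (n : ℕ) (x : X), term n (ρ (σ, x)) ≤ term n x := by
    intro σ n x
    have hnum : φr (v (ρ (sq n, ρ (σ, x)))) ≤ φr (v (ρ (sq n, x))) := by
      rw [hρ_comp]
      apply hφr_mono _ _ (hv_nonneg _)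
      apply hvmono _ _ _ x
      show (sq n).1 * σ.1 ≤ (sq n).1
      exact mul_le_of_le_one_right (sq n).2.1 σ.2.2
    simp only [htermdef]
    gcongr
  have hw_ray : ∀ (σ : I) (x : X), w (ρ (σ, x)) ≤ w x := by
    intro σ x
    exact Summable.tsum_le_tsum (fun n => hterm_mono_ray σ n x) (hsumW _) (hsumW _)
  have hu_ray : ∀ (σ : I) (x : X), u (ρ (σ, x)) ≤ u x := by
    intro σ x
    exact add_le_add (hv_ρ_le σ x) (hw_ray σ x)
  set m₀ : ℝ := f p + φr (f p) with hm₀def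
  have htsum_const : ∀ κ : ℝ, ∑' n : ℕ, κ / 2 ^ (n+1) = κ := by
    intro κ
    have h2 : ∀ n : ℕ, κ / 2 ^ (n+1) = κ / 2 / 2 ^ n := by
      intro n; rw [pow_succ]; ring
    calc ∑' n : ℕ, κ / 2 ^ (n+1) = ∑' n : ℕ, κ / 2 / 2 ^ n := tsum_congr h2
    _ = κ := tsum_geometric_two' κ
  have humin : ∀ y, m₀ ≤ u y := by
    intro y
    have h1 : f p ≤ v y := hvp_le y
    have h2 : φr (f p) ≤ w y := by
      rw [← htsum_const (φr (f p))]
      apply Summable.tsum_le_tsum ?_ (hconst_summable _) (hsumW _)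
      intro n
      have : φr (f p) ≤ φr (v (ρ (sq n, y))) :=
        hφr_mono _ _ (hfnonneg p) (hvp_le _)
      simp only [htermdef]
      gcongr
    rw [hm₀def, hudef]
    dsimp only
    linarith
  have hdicho : ∀ (x : X) (σ : I), 0 < σ.1 → σ.1 < 1 →
      u (ρ (σ, x)) < u x ∨ u x = m₀ := by
    intro x σ hσ0 hσ1
    by_cases hlt : u (ρ (σ, x)) < u x
    · exact Or.inl hlt
    right
    have hueq : v (ρ (σ, x)) + w (ρ (σ, x)) = v x + w x :=
      le_antisymm (hu_ray σ x) (not_lt.mp hlt)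
    have hveq : v (ρ (σ, x)) = v x := by
      have h1 := hv_ρ_le σ x
      have h2 := hw_ray σ x
      linarith
    have hweq : w (ρ (σ, x)) = w x := by
      have h1 := hv_ρ_le σ x
      have h2 := hw_ray σ x
      linarith
    have hterm_eq : ∀ n, term n (ρ (σ, x)) = term n x := by
      intro n
      by_contra hne'
      have hlt' : term n (ρ (σ, x)) < term n x :=
        lt_of_le_of_ne (hterm_mono_ray σ n x) hne'
      have hts : ∑' m, term m (ρ (σ, x)) < ∑' m, term m x :=
        Summable.tsum_lt_tsum (fun m => hterm_mono_ray σ m x) hlt' (hsumW _) (hsumW _)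
      have : w (ρ (σ, x)) < w x := hts
      exact absurd hweq (ne_of_lt this)
    have hg_eq : ∀ n, v (ρ (⟨(sq n).1 * σ.1, hIm _ σ⟩, x)) = v (ρ (sq n, x)) := by
      intro n
      have h1 : v (ρ (⟨(sq n).1 * σ.1, hIm _ σ⟩, x)) ≤ v (ρ (sq n, x)) :=
        hvmono _ _ (mul_le_of_le_one_right (sq n).2.1 σ.2.2) x
      rcases eq_or_lt_of_le h1 with h | h
      · exact h
      exfalso
      have hφlt : φr (v (ρ (⟨(sq n).1 * σ.1, hIm _ σ⟩, x))) < φr (v (ρ (sq n, x))) :=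
        hφr_strict _ _ (hv_nonneg _) h
      have hstrict : term n (ρ (σ, x)) < term n x := by
        simp only [htermdef]
        rw [hρ_comp]
        gcongr
      exact absurd (hterm_eq n) (ne_of_lt hstrict)
    set g : I → ℝ := fun a => v (ρ (a, x)) with hgdef
    have hg_cont : Continuous g := hv_cont.comp (hρcont.comp (by fun_prop))
    have hmulσ_cont : Continuous fun a : I => (⟨a.1 * σ.1, hIm a σ⟩ : I) := by
      apply Continuous.subtype_mk; fun_prop
    have hall : ∀ a : I, g ⟨a.1 * σ.1, hIm a σ⟩ = g a := by
      have heq : (g ∘ fun a : I => (⟨a.1 * σ.1, hIm a σ⟩ : I)) ∘ sq = g ∘ sq := by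
        funext n
        exact hg_eq n
      have := hsq.equalizer (hg_cont.comp hmulσ_cont) hg_cont heq
      intro a
      exact congrFun this a
    have hpow_mem : ∀ k : ℕ, σ.1 ^ k ∈ I := fun k =>
      ⟨pow_nonneg σ.2.1 k, pow_le_one₀ σ.2.1 σ.2.2⟩
    have hiter : ∀ k : ℕ, g ⟨σ.1 ^ k, hpow_mem k⟩ = g ⟨1, hone⟩ := by
      intro k
      induction k with
      | zero =>
        exact congrArg g (Subtype.ext (pow_zero _))
      | succ k ih =>
        have h1 : (⟨σ.1 ^ (k+1), hpow_mem (k+1)⟩ : I) =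
            ⟨(⟨σ.1 ^ k, hpow_mem k⟩ : I).1 * σ.1, hIm _ σ⟩ :=
          Subtype.ext (pow_succ _ _)
        rw [h1, hall ⟨σ.1 ^ k, hpow_mem k⟩, ih]
    have hlim : Tendsto (fun k : ℕ => g ⟨σ.1 ^ k, hpow_mem k⟩) atTop (𝓝 (g ⟨0, hzero⟩)) := by
      apply (hg_cont.tendsto _).comp
      rw [tendsto_subtype_rng]
      exact tendsto_pow_atTop_nhds_zero_of_lt_one σ.2.1 hσ1
    have hconst : Tendsto (fun k : ℕ => g ⟨σ.1 ^ k, hpow_mem k⟩) atTop (𝓝 (g ⟨1, hone⟩)) := by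
      have : (fun k : ℕ => g ⟨σ.1 ^ k, hpow_mem k⟩) = fun _ => g ⟨1, hone⟩ := by
        funext k; exact hiter k
      rw [this]
      exact tendsto_const_nhds
    have h01 : g ⟨0, hzero⟩ = g ⟨1, hone⟩ := tendsto_nhds_unique hlim hconst
    have hg0 : g ⟨0, hzero⟩ = f p := by
      show v (ρ (⟨0, hzero⟩, x)) = f p
      rw [hρ_zero _ _ rfl]
      exact hvp
    have hgconst : ∀ a : I, g a = f p := by
      intro a
      have hle1 : g ⟨0, hzero⟩ ≤ g a := hvmono _ _ a.2.1 x
      have hle2 : g a ≤ g ⟨1, hone⟩ := hvmono _ _ a.2.2 x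
      rw [← h01, hg0] at hle2
      rw [hg0] at hle1
      exact le_antisymm hle2 hle1
    have hvx : v x = f p := by
      have h := hgconst ⟨1, hone⟩
      show v x = f p
      rw [← hρ_one ⟨1, hone⟩ x rfl]
      exact h
    have hwx : w x = φr (f p) := by
      show (∑' n, term n x) = φr (f p)
      rw [← htsum_const (φr (f p))]
      apply tsum_congr
      intro n
      show φr (v (ρ (sq n, x))) / 2 ^ (n+1) = φr (f p) / 2 ^ (n+1)
      rw [show v (ρ (sq n, x)) = f p from hgconst (sq n)]
    show v x + w x = m₀
    rw [hvx, hwx]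
  -- sublevel sets
  set Z : ℝ → Set X := fun c => {y : X | u y ≤ c} with hZdef
  have hZcpt : ∀ c, IsCompact (Z c) := by
    intro c
    have hsub : Z c ⊆ {y : X | f y ≤ c} := by
      intro y hy
      have h1 : f y ≤ v y := hfv y
      have h2 : 0 ≤ w y := hw_nonneg y
      have h3 : v y + w y ≤ c := hy
      show f y ≤ c
      linarith
    exact (hfproper c).of_isClosed_subset (isClosed_le hu_cont continuous_const) hsub
  have hZmono : ∀ {c c' : ℝ}, c ≤ c' → Z c ⊆ Z c' := fun h y hy => le_trans hy h
  -- the segment-join map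
  have hsegmem : ∀ (x y : X) (t : I), (1 - t.1) • (x:L) + t.1 • (y:L) ∈ X := fun x y t =>
    hconv x.2 y.2 (by linarith [t.2.2]) t.2.1 (by ring)
  set sg : X × X × I → X :=
    fun q => ⟨(1 - q.2.2.1) • (q.1 : L) + q.2.2.1 • (q.2.1 : L), hsegmem _ _ _⟩ with hsgdef
  have hsgcont : Continuous sg := by
    apply Continuous.subtype_mk; fun_prop
  set J : Set X → Set X := fun A => sg '' (A ×ˢ A ×ˢ (univ : Set I)) with hJdef
  have hJcpt : ∀ {A : Set X}, IsCompact A → IsCompact (J A) := fun hA =>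
    (hA.prod (hA.prod isCompact_univ)).image hsgcont
  have hself : ∀ (A : Set X) (a : X), a ∈ A → a ∈ J A := by
    intro A a ha
    refine ⟨(a, a, ⟨0, hzero⟩), ⟨ha, ha, mem_univ _⟩, ?_⟩
    apply Subtype.ext
    show (1 - 0) • (a:L) + 0 • (a:L) = a
    simp
  have hJmono : ∀ {A B : Set X}, A ⊆ B → J A ⊆ J B := by
    rintro A B hAB _ ⟨q, ⟨h1, h2, h3⟩, rfl⟩
    exact ⟨q, ⟨hAB h1, hAB h2, h3⟩, rfl⟩
  set Φ : X → NonemptyCompacts X := fun x =>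
    ⟨⟨J (Z (u x)), hJcpt (hZcpt _)⟩, ⟨x, hself _ x (show u x ≤ u x from le_refl _)⟩⟩ with hΦdef
  -- segment property
  have hsegprop : ∀ x y : X, segment ℝ (x : L) (y : L) ⊆
      Subtype.val '' ((Φ x : Set X) ∪ (Φ y : Set X)) := by
    intro x y
    rintro z ⟨a, b, ha, hb, hab, rfl⟩
    have hbI : b ∈ I := ⟨hb, by linarith⟩
    have hval : ((sg (x, y, ⟨b, hbI⟩) : X) : L) = a • (x:L) + b • (y:L) := by
      show (1 - b) • (x:L) + b • (y:L) = a • (x:L) + b • (y:L)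
      rw [show (1:ℝ) - b = a by linarith]
    rcases le_total (u x) (u y) with h | h
    · refine ⟨sg (x, y, ⟨b, hbI⟩), Or.inr ?_, hval⟩
      exact ⟨(x, y, ⟨b, hbI⟩), ⟨h, show u y ≤ u y from le_refl _, mem_univ _⟩, rfl⟩
    · refine ⟨sg (x, y, ⟨b, hbI⟩), Or.inl ?_, hval⟩
      exact ⟨(x, y, ⟨b, hbI⟩), ⟨show u x ≤ u x from le_refl _, h, mem_univ _⟩, rfl⟩
  -- upper semicontinuity
  have hupper : ∀ U : Set X, IsOpen U → IsOpen {x : X | J (Z (u x)) ⊆ U} := by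
    intro U hU
    rw [isOpen_iff_mem_nhds]
    intro x₀ hx₀
    have hex : ∃ ε : ℝ, 0 < ε ∧ J (Z (u x₀ + ε)) ⊆ U := by
      set P := ((Z (u x₀ + 1)) ×ˢ (Z (u x₀ + 1)) ×ˢ (univ : Set I)) ∩ sg ⁻¹' Uᶜ with hPdef
      have hPcpt : IsCompact P :=
        ((hZcpt _).prod ((hZcpt _).prod isCompact_univ)).inter_right
          (hU.isClosed_compl.preimage hsgcont)
      rcases eq_empty_or_nonempty P with hP | hP
      · refine ⟨1, by norm_num, ?_⟩
        rintro _ ⟨q, hq, rfl⟩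
        by_contra hqU
        have hmem' : q ∈ P := ⟨hq, hqU⟩
        rw [hP] at hmem'
        exact hmem'
      · set mf : X × X × I → ℝ := fun q => max (u q.1) (u q.2.1) with hmfdef
        have hmfcont : Continuous mf :=
          (hu_cont.comp continuous_fst).max
            (hu_cont.comp (continuous_fst.comp continuous_snd))
        obtain ⟨qb, hqbP, hqbmin⟩ := hPcpt.exists_isMinOn hP hmfcont.continuousOn
        have hqbc : u x₀ < mf qb := by
          by_contra hle
          push_neg at hle
          have hx1 : qb.1 ∈ Z (u x₀) := le_trans (le_max_left _ _) hle
          have hx2 : qb.2.1 ∈ Z (u x₀) := le_trans (le_max_right _ _) hle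
          have hsgJ : sg qb ∈ J (Z (u x₀)) := ⟨qb, ⟨hx1, hx2, mem_univ _⟩, rfl⟩
          exact hqbP.2 (hx₀ hsgJ)
        refine ⟨min 1 ((mf qb - u x₀)/2), lt_min (by norm_num) (half_pos (sub_pos.mpr hqbc)), ?_⟩
        rintro _ ⟨q, ⟨hq1, hq2, -⟩, rfl⟩
        by_contra hqU
        have hεle : min 1 ((mf qb - u x₀)/2) ≤ 1 := min_le_left _ _
        have hqP : q ∈ P := by
          refine ⟨⟨?_, ?_, mem_univ _⟩, hqU⟩
          · exact hZmono (by linarith) hq1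
          · exact hZmono (by linarith) hq2
        have hmin := hqbmin hqP
        have hq1' : u q.1 ≤ u x₀ + min 1 ((mf qb - u x₀)/2) := hq1
        have hq2' : u q.2.1 ≤ u x₀ + min 1 ((mf qb - u x₀)/2) := hq2
        have hmax : mf qb ≤ max (u q.1) (u q.2.1) := hmin
        have h2 : min 1 ((mf qb - u x₀)/2) ≤ (mf qb - u x₀)/2 := min_le_right _ _
        have h3 : max (u q.1) (u q.2.1) ≤ u x₀ + min 1 ((mf qb - u x₀)/2) := max_le hq1' hq2'
        have hchain : mf qb ≤ u x₀ + (mf qb - u x₀)/2 :=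
          le_trans (le_trans hmax h3) (add_le_add_right h2 _)
        have hsub : mf qb - u x₀ ≤ (mf qb - u x₀)/2 := by
          rw [sub_le_iff_le_add']
          exact hchain
        exact absurd (lt_of_le_of_lt hsub (half_lt_self (sub_pos.mpr hqbc))) (lt_irrefl _)
    obtain ⟨ε, hε, hJε⟩ := hex
    have hno : {x : X | u x < u x₀ + ε} ∈ 𝓝 x₀ :=
      (isOpen_lt hu_cont continuous_const).mem_nhds (by show u x₀ < u x₀ + ε; linarith)
    filter_upwards [hno] with x hx
    exact subset_trans (hJmono (hZmono (le_of_lt hx))) hJε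
  -- lower semicontinuity
  have hmemI2 : ∀ k : ℕ, (1 : ℝ) - 1/(k+2) ∈ I := by
    intro k
    constructor
    · have : (1:ℝ)/(k+2) ≤ 1 := by
        rw [div_le_one (by positivity)]
        linarith [Nat.cast_nonneg (α := ℝ) k]
      linarith
    · have : (0:ℝ) < 1/(k+2) := by positivity
      linarith
  have hlower : ∀ U : Set X, IsOpen U → IsOpen {x : X | (J (Z (u x)) ∩ U).Nonempty} := by
    intro U hU
    rw [isOpen_iff_mem_nhds]
    rintro x₀ ⟨z₀, ⟨⟨a, b, t⟩, ⟨hqa, hqb, -⟩, rfl⟩, hzU⟩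
    have hcont2 : Continuous fun pq : X × X => sg (pq.1, pq.2, t) :=
      hsgcont.comp (by fun_prop)
    have hopen2 : IsOpen ((fun pq : X × X => sg (pq.1, pq.2, t)) ⁻¹' U) := hU.preimage hcont2
    obtain ⟨Va, Vb, hVaop, hVbop, haVa, hbVb, hprod⟩ :=
      isOpen_prod_iff.mp hopen2 a b hzU
    have happrox : ∀ (e : X), u e ≤ u x₀ → ∀ Ve : Set X, IsOpen Ve → e ∈ Ve →
        ∃ e' ∈ Ve, ∃ Ne ∈ 𝓝 x₀, ∀ x ∈ Ne, u e' ≤ u x := by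
      intro e he Ve hVeop heVe
      rcases lt_or_eq_of_le he with hlt | heq
      · exact ⟨e, heVe, {x | u e < u x},
          (isOpen_lt continuous_const hu_cont).mem_nhds hlt,
          fun x hx => le_of_lt hx⟩
      · have htd1 : Tendsto (fun k : ℕ => (1:ℝ) - 1/(k+2)) atTop (𝓝 1) := by
          have h2 : Tendsto (fun k : ℕ => (1:ℝ)/(k+2)) atTop (𝓝 0) := by
            have h3 := tendsto_one_div_add_atTop_nhds_zero_nat (𝕜 := ℝ)
            have h4 : Tendsto (fun n : ℕ => n + 1) atTop atTop := tendsto_add_atTop_nat 1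
            have h5 := h3.comp h4
            convert h5 using 2 with k
            simp; ring_nf
          have := (tendsto_const_nhds (x := (1:ℝ)) (f := atTop (α := ℕ))).sub h2
          simpa using this
        have htdI : Tendsto (fun k : ℕ => (⟨1 - 1/(k+2), hmemI2 k⟩ : I)) atTop
            (𝓝 (⟨1, hone⟩ : I)) := by
          rw [tendsto_subtype_rng]
          exact htd1
        have htd : Tendsto (fun k : ℕ => ρ (⟨1 - 1/(k+2), hmemI2 k⟩, e)) atTop (𝓝 e) := by
          have hce : Continuous fun s : I => ρ (s, e) := hρcont.comp (by fun_prop)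
          have := (hce.tendsto _).comp htdI
          rwa [hρ_one ⟨1, hone⟩ e rfl] at this
        obtain ⟨k, hk⟩ := (htd.eventually_mem (hVeop.mem_nhds heVe)).exists
        have h0k : 0 < (1:ℝ) - 1/(k+2) := by
          have : (1:ℝ)/(k+2) < 1 := by
            rw [div_lt_one (by positivity)]
            linarith [Nat.cast_nonneg (α := ℝ) k]
          linarith
        have h1k : (1:ℝ) - 1/(k+2) < 1 := by
          have : (0:ℝ) < 1/(k+2) := by positivity
          linarith
        rcases hdicho e ⟨1 - 1/(k+2), hmemI2 k⟩ h0k h1k with hlt' | hmin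
        · refine ⟨ρ (⟨1 - 1/(k+2), hmemI2 k⟩, e), hk, {x | u (ρ (⟨1 - 1/(k+2), hmemI2 k⟩, e)) < u x},
            (isOpen_lt continuous_const hu_cont).mem_nhds ?_, fun x hx => le_of_lt hx⟩
          show u (ρ (⟨1 - 1/(k+2), hmemI2 k⟩, e)) < u x₀
          rw [← heq]
          exact hlt'
        · refine ⟨e, heVe, univ, univ_mem, fun x _ => ?_⟩
          rw [hmin]
          exact humin x
    obtain ⟨a', ha'Va, Na, hNa, hNa2⟩ := happrox a hqa Va hVaop haVa
    obtain ⟨b', hb'Vb, Nb, hNb, hNb2⟩ := happrox b hqb Vb hVbop hbVb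
    filter_upwards [hNa, hNb] with x hxa hxb
    refine ⟨sg (a', b', t), ⟨(a', b', t), ⟨hNa2 x hxa, hNb2 x hxb, mem_univ _⟩, rfl⟩, ?_⟩
    exact hprod (mk_mem_prod ha'Va hb'Vb)
  -- assemble
  refine ⟨Φ, ?_, hsegprop⟩
  apply continuous_generateFrom_iff.mpr
  rintro S (⟨U, hU, rfl⟩ | ⟨U, hU, rfl⟩)
  · exact hupper U hU
  · exact hlower U hU

theorem lc_implies_cc (X : Set L) (hne : X.Nonempty) (hconv : Convex ℝ X)
    (hcl : IsClosed X) (hlc : LocallyCompactSpace X) : IsCompactlyConvex X := by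
  haveI := hlc
  haveI : SigmaCompactSpace X := sigma_cpt X hne hconv hcl
  obtain ⟨f, hfcont, hfnonneg, hfproper⟩ := exists_proper_function X
  exact lc_implies_cc_core X hne hconv hcl f hfcont hfnonneg hfproper

end Proofs

/-- For a nonempty closed convex subset `X` of a Hausdorff topological vector space the
following are equivalent: (1) `X` is compactly convex; (2) `X` is upper compactly convex;
(3) `X` is locally compact. -/
theorem closed_convex_tfae
    {L : Type*} [TopologicalSpace L] [AddCommGroup L] [Module ℝ L]
    [IsTopologicalAddGroup L] [ContinuousSMul ℝ L] [T2Space L]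
    (X : Set L) (hne : X.Nonempty) (hconv : Convex ℝ X) (hcl : IsClosed X) :
    (IsCompactlyConvex X ↔ IsUpperCompactlyConvex X) ∧
    (IsUpperCompactlyConvex X ↔ LocallyCompactSpace X) := by
  have h12 : IsCompactlyConvex X → IsUpperCompactlyConvex X := cc_implies_ucc X
  have h23 : IsUpperCompactlyConvex X → LocallyCompactSpace X := ucc_implies_lc X hcl
  have h31 : LocallyCompactSpace X → IsCompactlyConvex X := lc_implies_cc X hne hconv hcl
  exact ⟨⟨h12, fun h2 => h31 (h23 h2)⟩, ⟨h23, fun h3 => h12 (h31 h3)⟩⟩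
end

section
/- Every nonempty closed, convex, locally compact subset of a real topological vector space is σ-compact. -/
open TopologicalSpace Set

/-- Each nonempty closed convex locally compact subset of a topological vector space is
σ-compact. -/
theorem closed_convex_locallyCompact_isSigmaCompact
    {L : Type*} [TopologicalSpace L] [AddCommGroup L] [Module ℝ L]
    [IsTopologicalAddGroup L] [ContinuousSMul ℝ L]
    (X : Set L) (hne : X.Nonempty) (hcl : IsClosed X) (hconv : Convex ℝ X)
    (hlc : LocallyCompactSpace X) :
    IsSigmaCompact X := by
  obtain ⟨x₀, hx₀⟩ := hne
  obtain ⟨s, hs_comp, hs_nhds⟩ := exists_compact_mem_nhds (⟨x₀, hx₀⟩ : X)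
  rw [mem_nhds_subtype] at hs_nhds
  obtain ⟨T, hT, hTs⟩ := hs_nhds
  set K' : Set L := Subtype.val '' s with hK'
  have hK'comp : IsCompact K' := hs_comp.image continuous_subtype_val
  set g : ℕ → L → L := fun n y => x₀ + (n : ℝ) • (y - x₀) with hg
  have hgcont : ∀ n, Continuous (g n) := by
    intro n; exact continuous_const.add ((continuous_id.sub continuous_const).const_smul _)
  refine ⟨fun n => (g n '' K') ∩ X,
    fun n => (hK'comp.image (hgcont n)).inter_right hcl, ?_⟩
  apply subset_antisymm
  · intro x hx
    simp only [mem_iUnion] at hx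
    obtain ⟨n, -, hxX⟩ := hx
    exact hxX
  · intro x hx
    obtain ⟨V, hVT, hVopen, hx₀V⟩ := mem_nhds_iff.mp hT
    set f : ℝ → L := fun t => x₀ + t • (x - x₀) with hf
    have hfcont : Continuous f :=
      continuous_const.add (continuous_id.smul continuous_const)
    have hf0 : f 0 ∈ V := by simpa [hf] using hx₀V
    have hopen : IsOpen (f ⁻¹' V) := hVopen.preimage hfcont
    obtain ⟨ε, hε, hball⟩ := Metric.isOpen_iff.mp hopen 0 hf0
    obtain ⟨n, hn⟩ := exists_nat_one_div_lt hε
    set t : ℝ := 1 / (n + 1 : ℝ) with ht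
    have htpos : 0 < t := by positivity
    have ht1 : t ≤ 1 := by
      rw [ht, div_le_one (by positivity)]
      linarith [Nat.cast_nonneg (α := ℝ) n]
    have hyV : f t ∈ V := by
      apply hball
      simp only [Metric.mem_ball, Real.dist_eq, sub_zero]
      rw [abs_of_pos htpos]
      exact_mod_cast hn
    have hyX : f t ∈ X := by
      have : (1 - t) • x₀ + t • x = f t := by rw [hf]; module
      rw [← this]
      exact hconv hx₀ hx (by linarith) (le_of_lt htpos) (by ring)
    have hyK' : f t ∈ K' := by
      have : (⟨f t, hyX⟩ : X) ∈ s := hTs (hVT hyV)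
      exact ⟨⟨f t, hyX⟩, this, rfl⟩
    simp only [mem_iUnion]
    refine ⟨n + 1, ⟨f t, hyK', ?_⟩, hx⟩
    have hne' : (n + 1 : ℝ) ≠ 0 := by positivity
    rw [hg, hf]
    simp only [Nat.cast_add, Nat.cast_one]
    rw [add_sub_cancel_left, smul_smul, mul_one_div, div_self hne', one_smul]
    abel
end

section
/- Let X be a compactly convex subset of a real topological vector space. Then for every natural number n there exists a map Φ assigning to each point x ∈ X a nonempty compact subset Φ(x) ⊆ X, continuous with respect to the Vietoris topology on the hyperspace exp(X) of nonempty compact subsets of X, such that for every subset F ⊆ X with |F| ≤ n the convex hull conv(F) is contained in ⋃_{x ∈ F} Φ(x). -/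
open TopologicalSpace Set

section Aux
variable {C : Type*} [TopologicalSpace C] {A : Type*} [TopologicalSpace A]

lemma vietoris_continuous_iff (f : A → NonemptyCompacts C) :
    @Continuous _ _ _ (vietorisTopology C) f ↔
      (∀ U : Set C, IsOpen U → IsOpen {a : A | (f a : Set C) ⊆ U}) ∧
      (∀ U : Set C, IsOpen U → IsOpen {a : A | ((f a : Set C) ∩ U).Nonempty}) := by
  rw [vietorisTopology, continuous_generateFrom_iff]
  constructor
  · intro h
    exact ⟨fun U hU => h _ (Or.inl ⟨U, hU, rfl⟩), fun U hU => h _ (Or.inr ⟨U, hU, rfl⟩)⟩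
  · rintro ⟨h1, h2⟩ s (⟨U, hU, rfl⟩ | ⟨U, hU, rfl⟩)
    · exact h1 U hU
    · exact h2 U hU

lemma isCompact_biUnion_usc (Φ : C → NonemptyCompacts C)
    (husc : ∀ U : Set C, IsOpen U → IsOpen {x : C | (Φ x : Set C) ⊆ U})
    {K : Set C} (hK : IsCompact K) :
    IsCompact (⋃ y ∈ K, (Φ y : Set C)) := by
  classical
  refine isCompact_of_finite_subcover fun {ι} U hU hcov => ?_
  have key : ∀ y : C, y ∈ K → ∃ t : Finset ι, (Φ y : Set C) ⊆ ⋃ i ∈ t, U i := fun y hy =>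
    (Φ y).isCompact.elim_finite_subcover U hU
      ((Set.subset_biUnion_of_mem hy).trans hcov)
  choose t ht using key
  set W : K → Set C := fun p => {z : C | (Φ z : Set C) ⊆ ⋃ i ∈ t p.1 p.2, U i} with hW
  have hWopen : ∀ p : K, IsOpen (W p) := fun p =>
    husc _ (isOpen_biUnion fun i _ => hU i)
  have hKcov : K ⊆ ⋃ p : K, W p := fun y hy =>
    Set.mem_iUnion.2 ⟨⟨y, hy⟩, ht y hy⟩
  obtain ⟨s, hs⟩ := hK.elim_finite_subcover W hWopen hKcov
  refine ⟨s.biUnion (fun p => t p.1 p.2), ?_⟩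
  rintro z hz
  simp only [Set.mem_iUnion] at hz
  obtain ⟨y, hy, hzy⟩ := hz
  obtain ⟨p, hps, hyp⟩ := Set.mem_iUnion₂.1 (hs hy)
  have : z ∈ ⋃ i ∈ t p.1 p.2, U i := hyp hzy
  obtain ⟨i, hit, hzi⟩ := Set.mem_iUnion₂.1 this
  exact Set.mem_iUnion₂.2 ⟨i, Finset.mem_biUnion.2 ⟨p, hps, hit⟩, hzi⟩

noncomputable def bigPhi (Φ : C → NonemptyCompacts C)
    (husc : ∀ U : Set C, IsOpen U → IsOpen {x : C | (Φ x : Set C) ⊆ U})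
    (K : NonemptyCompacts C) : NonemptyCompacts C :=
  ⟨⟨⋃ y ∈ (K : Set C), (Φ y : Set C), isCompact_biUnion_usc Φ husc K.isCompact⟩, by
    obtain ⟨y, hy⟩ := K.nonempty
    obtain ⟨z, hz⟩ := (Φ y).nonempty
    exact ⟨z, Set.mem_biUnion hy hz⟩⟩

@[simp] lemma bigPhi_coe (Φ : C → NonemptyCompacts C) (husc) (K : NonemptyCompacts C) :
    (bigPhi Φ husc K : Set C) = ⋃ y ∈ (K : Set C), (Φ y : Set C) := rfl

end Aux
open TopologicalSpace Set

section Aux2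
variable {C : Type*} [TopologicalSpace C] {A : Type*} [TopologicalSpace A]

lemma usc_bigPhi_comp (Φ : C → NonemptyCompacts C)
    (husc : ∀ U : Set C, IsOpen U → IsOpen {x : C | (Φ x : Set C) ⊆ U})
    (g : A → NonemptyCompacts C)
    (hg : ∀ U : Set C, IsOpen U → IsOpen {a : A | (g a : Set C) ⊆ U})
    (U : Set C) (hU : IsOpen U) :
    IsOpen {a : A | (bigPhi Φ husc (g a) : Set C) ⊆ U} := by
  have : {a : A | (bigPhi Φ husc (g a) : Set C) ⊆ U}
      = {a : A | (g a : Set C) ⊆ {y : C | (Φ y : Set C) ⊆ U}} := by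
    ext a
    simp only [mem_setOf_eq, bigPhi_coe, Set.iUnion₂_subset_iff]
    exact Iff.rfl
  rw [this]
  exact hg _ (husc U hU)

lemma lsc_bigPhi_comp (Φ : C → NonemptyCompacts C)
    (husc : ∀ U : Set C, IsOpen U → IsOpen {x : C | (Φ x : Set C) ⊆ U})
    (hlsc : ∀ U : Set C, IsOpen U → IsOpen {x : C | ((Φ x : Set C) ∩ U).Nonempty})
    (g : A → NonemptyCompacts C)
    (hg : ∀ U : Set C, IsOpen U → IsOpen {a : A | ((g a : Set C) ∩ U).Nonempty})
    (U : Set C) (hU : IsOpen U) :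
    IsOpen {a : A | ((bigPhi Φ husc (g a) : Set C) ∩ U).Nonempty} := by
  have : {a : A | ((bigPhi Φ husc (g a) : Set C) ∩ U).Nonempty}
      = {a : A | ((g a : Set C) ∩ {y : C | ((Φ y : Set C) ∩ U).Nonempty}).Nonempty} := by
    ext a
    simp only [mem_setOf_eq, bigPhi_coe, Set.Nonempty, Set.mem_inter_iff, Set.mem_iUnion,
      mem_setOf_eq]
    constructor
    · rintro ⟨z, ⟨y, hy, hzy⟩, hzU⟩
      exact ⟨y, hy, z, hzy, hzU⟩
    · rintro ⟨y, hy, z, hzy, hzU⟩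
      exact ⟨z, ⟨y, hy, hzy⟩, hzU⟩
  rw [this]
  exact hg _ (hlsc U hU)

noncomputable def phiIter (Φ : C → NonemptyCompacts C)
    (husc : ∀ U : Set C, IsOpen U → IsOpen {x : C | (Φ x : Set C) ⊆ U}) :
    ℕ → C → NonemptyCompacts C
  | 0 => Φ
  | (k+1) => fun x => Φ x ⊔ bigPhi Φ husc (phiIter Φ husc k x)

@[simp] lemma phiIter_succ_coe (Φ : C → NonemptyCompacts C) (husc) (k : ℕ) (x : C) :
    (phiIter Φ husc (k+1) x : Set C)
      = (Φ x : Set C) ∪ ⋃ y ∈ (phiIter Φ husc k x : Set C), (Φ y : Set C) := rfl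

lemma phiIter_usc (Φ : C → NonemptyCompacts C)
    (husc : ∀ U : Set C, IsOpen U → IsOpen {x : C | (Φ x : Set C) ⊆ U}) (k : ℕ) :
    ∀ U : Set C, IsOpen U → IsOpen {x : C | (phiIter Φ husc k x : Set C) ⊆ U} := by
  induction k with
  | zero => exact husc
  | succ k ih =>
    intro U hU
    have : {x : C | (phiIter Φ husc (k+1) x : Set C) ⊆ U}
        = {x : C | (Φ x : Set C) ⊆ U} ∩
          {x : C | (bigPhi Φ husc (phiIter Φ husc k x) : Set C) ⊆ U} := by
      ext x
      simp only [mem_setOf_eq, mem_inter_iff, phiIter_succ_coe, union_subset_iff, bigPhi_coe]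
    rw [this]
    exact (husc U hU).inter (usc_bigPhi_comp Φ husc _ ih U hU)

lemma phiIter_lsc (Φ : C → NonemptyCompacts C)
    (husc : ∀ U : Set C, IsOpen U → IsOpen {x : C | (Φ x : Set C) ⊆ U})
    (hlsc : ∀ U : Set C, IsOpen U → IsOpen {x : C | ((Φ x : Set C) ∩ U).Nonempty}) (k : ℕ) :
    ∀ U : Set C, IsOpen U → IsOpen {x : C | ((phiIter Φ husc k x : Set C) ∩ U).Nonempty} := by
  induction k with
  | zero => exact hlsc
  | succ k ih =>
    intro U hU
    have : {x : C | ((phiIter Φ husc (k+1) x : Set C) ∩ U).Nonempty}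
        = {x : C | ((Φ x : Set C) ∩ U).Nonempty} ∪
          {x : C | ((bigPhi Φ husc (phiIter Φ husc k x) : Set C) ∩ U).Nonempty} := by
      ext x
      simp only [mem_setOf_eq, mem_union, phiIter_succ_coe, bigPhi_coe, union_inter_distrib_right,
        union_nonempty]
    rw [this]
    exact (hlsc U hU).union (lsc_bigPhi_comp Φ husc hlsc _ ih U hU)

end Aux2
/-- Self-enforcement of compact convexity: if `X` is compactly convex then for every `n`
there is a continuous compact-valued map `Φ` with `conv F ⊆ ⋃_{x ∈ F} Φ x` for every
subset `F ⊆ X` of size at most `n`. -/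
theorem compactlyConvex_hull_cover (n : ℕ)
    {L : Type*} [TopologicalSpace L] [AddCommGroup L] [Module ℝ L]
    (X : Set L) (hconv : Convex ℝ X) (hX : IsCompactlyConvex X) :
    ∃ Φ : X → NonemptyCompacts X,
      @Continuous _ _ _ (vietorisTopology X) Φ ∧
      ∀ F : Set L, ∀ hF : F ⊆ X, F.encard ≤ n →
        convexHull ℝ F ⊆ ⋃ x : F, Subtype.val '' (Φ (Set.inclusion hF x) : Set X) := by
  obtain ⟨Φ, hΦc, hseg⟩ := hX
  obtain ⟨husc, hlsc⟩ := (vietoris_continuous_iff Φ).1 hΦc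
  refine ⟨phiIter Φ husc n, (vietoris_continuous_iff _).2
    ⟨phiIter_usc Φ husc n, phiIter_lsc Φ husc hlsc n⟩, ?_⟩
  -- covering property, by induction on the iteration stage
  have cover : ∀ m : ℕ, ∀ F : Set L, ∀ hF : F ⊆ X, F.encard ≤ (m : ℕ∞) →
      convexHull ℝ F ⊆ ⋃ x : F, Subtype.val '' (phiIter Φ husc m (Set.inclusion hF x) : Set X) := by
    intro m
    induction m with
    | zero =>
      intro F hF hcard
      have : F = ∅ := by
        rw [← Set.encard_eq_zero]
        exact le_antisymm (by exact_mod_cast hcard) zero_le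
      subst this
      simp [convexHull_empty]
    | succ m ih =>
      intro F hF hcard
      rcases Set.eq_empty_or_nonempty F with rfl | ⟨a, ha⟩
      · simp [convexHull_empty]
      -- split F = insert a (F \ {a})
      set F' : Set L := F \ {a} with hF'def
      have hF'sub : F' ⊆ X := (Set.diff_subset).trans hF
      have hF'card : F'.encard ≤ (m : ℕ∞) := by
        have h1 : F'.encard = F.encard - 1 := Set.encard_diff_singleton_of_mem ha
        rw [h1]
        have h2 : F.encard ≤ (m : ℕ∞) + 1 := by exact_mod_cast hcard
        exact tsub_le_iff_right.2 h2
      have hFeq : F = insert a F' := by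
        rw [hF'def, Set.insert_diff_singleton, Set.insert_eq_self.2 ha]
      have haX : a ∈ X := hF ha
      -- key step: any point of a segment from a to a point of X is covered
      have key : ∀ z : L, ∀ w : L, (hw : w ∈ X) → z ∈ segment ℝ a w →
          (∃ z' : X, z' ∈ (Φ ⟨a, haX⟩ : Set X) ∧ (z' : L) = z) ∨
          (∃ z' : X, z' ∈ (Φ ⟨w, hw⟩ : Set X) ∧ (z' : L) = z) := by
        intro z w hw hz
        obtain ⟨z', hz', rfl⟩ := hseg ⟨a, haX⟩ ⟨w, hw⟩ hz
        rcases hz' with h | h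
        · exact Or.inl ⟨z', h, rfl⟩
        · exact Or.inr ⟨z', h, rfl⟩
      -- membership in the big union, given an element b of F and membership in phiIter (m+1)
      have mem_goal : ∀ b : L, (hb : b ∈ F) → ∀ z : L,
          (∃ z' : X, z' ∈ (phiIter Φ husc (m+1) ⟨b, hF hb⟩ : Set X) ∧ (z' : L) = z) →
          z ∈ ⋃ x : F, Subtype.val '' (phiIter Φ husc (m+1) (Set.inclusion hF x) : Set X) := by
        intro b hb z ⟨z', hz', hzz⟩
        exact Set.mem_iUnion.2 ⟨⟨b, hb⟩, ⟨z', hz', hzz⟩⟩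
      rcases Set.eq_empty_or_nonempty F' with hF'e | hF'ne
      · -- F = {a}
        have hFa : F = {a} := by rw [hFeq, hF'e]; simp
        intro z hz
        rw [hFa, convexHull_singleton] at hz
        have hza : z = a := hz
        subst hza
        have hzseg : z ∈ segment ℝ (z : L) z := by
          rw [segment_same]; exact rfl
        rcases key z z haX hzseg with ⟨z', hz', hzz⟩ | ⟨z', hz', hzz⟩ <;>
        · refine mem_goal z ha z ⟨z', ?_, hzz⟩
          rw [phiIter_succ_coe]
          exact Or.inl hz'
      · -- F' nonempty
        intro z hz
        rw [hFeq, convexHull_insert hF'ne] at hz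
        obtain ⟨a', ha', w, hw, hzseg⟩ := mem_convexJoin.1 hz
        rw [Set.mem_singleton_iff] at ha'
        rw [ha'] at hzseg
        have hwX : w ∈ X := convexHull_min hF'sub hconv hw
        rcases key z w hwX hzseg with ⟨z', hz', hzz⟩ | ⟨z', hz', hzz⟩
        · refine mem_goal a ha z ⟨z', ?_, hzz⟩
          rw [phiIter_succ_coe]
          exact Or.inl hz'
        · -- use IH on F'
          have hwmem := ih F' hF'sub hF'card hw
          obtain ⟨⟨b, hb⟩, w', hw', hww⟩ := Set.mem_iUnion.1 hwmem
          have hbF : b ∈ F := hFeq ▸ Set.mem_insert_of_mem a hb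
          have hw'' : (⟨w, hwX⟩ : X) ∈ (phiIter Φ husc m ⟨b, hF'sub hb⟩ : Set X) := by
            have : w' = ⟨w, hwX⟩ := Subtype.ext hww
            rwa [this] at hw'
          refine mem_goal b hbF z ⟨z', ?_, hzz⟩
          rw [phiIter_succ_coe]
          refine Or.inr (Set.mem_biUnion hw'' ?_)
          exact hz'
  exact cover n
end
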